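/- arXiv:1508.02152 — 3 statements merged into one kernel-verified Lean document; each statement's English description precedes it below -/
import Mathlib

section
/- Let f be a homeomorphism of the open annulus 𝔸 isotopic to the identity, and let γ and γ' be two disjoint f-free essential Jordan curves in 𝔸. Suppose γ is attracting (f(γ) ⊆ U_γ^S) and γ' is repulsing (f⁻¹(γ') ⊆ U_{γ'}^S). Then the maximal f-invariant subset of the closed annulus delimited by γ and γ' is a connected set. -/
/-!
Suppose `γ'` lies below `γ` (otherwise replace `f` by `f⁻¹` and swap the curves). The closed region
`B = (U_γ^N ∪ U_{γ'}^S)ᶜ` is compact, and connected because both its boundary curves are. Being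
isotopic to the identity, `f` preserves the two ends of the annulus; with `γ` attracting and `γ'`
repulsing this gives `f(B) ⊆ B`, so `⋂ₙ fⁿ(B)` is a nested intersection of compact connected sets,
hence connected, and it is invariant. A point `z ∈ B` with `f⁻¹(z) ∈ B` lies in `U_γ^S ∩ U_{γ'}^N`,
because `f⁻¹` sends `γ` and the bounded components of `γᶜ` into `U_γ^N`, and `γ'` and the
bounded components of `γ'ᶜ` into `U_{γ'}^S`. So `⋂ₙ fⁿ(B)` is contained in the closed annulus `A`, and it is `Θ(A)`.
-/

open Set Function Topology

noncomputable section

/-- The open annulus `𝔸 = 𝕋¹ × ℝ`. -/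
abbrev OpenAnn := AddCircle (1 : ℝ) × ℝ

/-- The universal covering `π : ℝ² → 𝔸`. -/
def projA : ℝ × ℝ → OpenAnn := fun p => ((p.1 : AddCircle (1 : ℝ)), p.2)

/-- The deck transformation `T(x,y) = (x+1, y)`. -/
def deckT : Equiv.Perm (ℝ × ℝ) where
  toFun p := (p.1 + 1, p.2)
  invFun p := (p.1 - 1, p.2)
  left_inv p := by simp
  right_inv p := by simp

/-- `f` is isotopic to the identity. -/
def IsotopicToIdA (f : OpenAnn → OpenAnn) : Prop :=
  ∃ H : ℝ × OpenAnn → OpenAnn, Continuous H ∧ (∀ z, H (0, z) = z) ∧ (∀ z, H (1, z) = f z) ∧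
    ∀ t : ℝ, IsHomeomorph fun z => H (t, z)

/-- The set `{ρ_n(z) : z ∈ K, fⁿ(z) ∈ K}`, viewed inside `ℝ̄ = EReal`. -/
def rhoPts (ftil : Equiv.Perm (ℝ × ℝ)) (n : ℕ) (K : Set OpenAnn) : Set EReal :=
  {x | ∃ zt : ℝ × ℝ, projA zt ∈ K ∧ projA ((ftil ^ n) zt) ∈ K ∧
    x = (((((ftil ^ n) zt).1 - zt.1) / n : ℝ) : EReal)}

/-- The rotation set `ρ_K(I)` of a set `K ⊆ 𝔸`. -/
def rhoK (ftil : Equiv.Perm (ℝ × ℝ)) (K : Set OpenAnn) : Set EReal :=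
  ⋂ (m : ℕ), ⋂ (_ : 1 ≤ m), closure (⋃ (n : ℕ), ⋃ (_ : m ≤ n), rhoPts ftil n K)

/-- The rotation set `ρ_ann(I)` of the open annulus. -/
def rhoAnn (ftil : Equiv.Perm (ℝ × ℝ)) : Set EReal :=
  closure (⋃ (K : Set OpenAnn), ⋃ (_ : IsCompact K), rhoK ftil K)

/-- The maximal `f`-invariant subset `Θ(E) = ⋂_{n ∈ ℤ} fⁿ(E)`. -/
def Theta (f : Equiv.Perm OpenAnn) (E : Set OpenAnn) : Set OpenAnn := ⋂ n : ℤ, (f ^ n) '' E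

/-- `γ` is a Jordan curve in the annulus. -/
def IsJordanCurve (γ : Set OpenAnn) : Prop :=
  ∃ e : AddCircle (1 : ℝ) → OpenAnn, Continuous e ∧ Injective e ∧ γ = range e

/-- A set is unbounded towards the upper end of the annulus. -/
def UnbAbove (C : Set OpenAnn) : Prop := ¬ BddAbove (Prod.snd '' C)

/-- A set is unbounded towards the lower end of the annulus. -/
def UnbBelow (C : Set OpenAnn) : Prop := ¬ BddBelow (Prod.snd '' C)

/-- `γ` is an essential Jordan curve: its complement has exactly two unbounded connected
components, the upper one `UN = U_γ^N` and the lower one `US = U_γ^S`. -/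
def IsEssential (γ UN US : Set OpenAnn) : Prop :=
  IsJordanCurve γ ∧
  (∃ x ∈ γᶜ, UN = connectedComponentIn γᶜ x) ∧
  (∃ x ∈ γᶜ, US = connectedComponentIn γᶜ x) ∧
  UnbAbove UN ∧ UnbBelow US ∧ UN ≠ US ∧
  ∀ C, (∃ x ∈ γᶜ, C = connectedComponentIn γᶜ x) → (UnbAbove C ∨ UnbBelow C) →
    C = UN ∨ C = US

open Bornology

section Topology

variable {X : Type*} [TopologicalSpace X]

theorem subset_connectedComponentIn_of_mem {F S : Set X} {x y : X}
    (hS : IsPreconnected S) (hSF : S ⊆ F) (hyS : y ∈ S) (hy : y ∈ connectedComponentIn F x) :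
    S ⊆ connectedComponentIn F x :=
  connectedComponentIn_eq hy ▸ hS.subset_connectedComponentIn hyS hSF

theorem frontier_connectedComponentIn_subset [LocallyConnectedSpace X] {F : Set X} (hF : IsOpen F)
    (x : X) : frontier (connectedComponentIn F x) ⊆ Fᶜ := by
  intro y hy hyF
  obtain ⟨z, hzy, hzx⟩ := mem_closure_iff.mp (frontier_subset_closure hy) _
    hF.connectedComponentIn (mem_connectedComponentIn hyF)
  rw [hF.connectedComponentIn.frontier_eq] at hy
  exact hy.2 (connectedComponentIn_eq hzx ▸ connectedComponentIn_eq hzy ▸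
    mem_connectedComponentIn hyF)

theorem IsPreconnected.subset_or_disjoint_of_disjoint_frontier {D W : Set X}
    (hD : IsPreconnected D) (hW : IsOpen W) (hDW : Disjoint D (frontier W)) :
    D ⊆ W ∨ Disjoint D W := by
  have hcover : D ⊆ W ∪ (closure W)ᶜ := fun x hx => by
    by_contra h
    simp only [mem_union, mem_compl_iff, not_or, not_not] at h
    exact hDW.notMem_of_mem_left hx (hW.frontier_eq ▸ ⟨h.2, h.1⟩)
  have hdisj : Disjoint W (closure W)ᶜ := disjoint_compl_right.mono_left subset_closure
  exact (hD.subset_or_subset hW isClosed_closure.isOpen_compl hdisj hcover).imp_right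
    fun h => (hdisj.symm.mono_left h)

theorem isClosed_union_of_frontier_subset {P F : Set X} (hF : IsClosed F) (h : frontier P ⊆ F) :
    IsClosed (P ∪ F) := by
  refine isClosed_of_closure_subset ?_
  rw [closure_union, closure_eq_self_union_frontier, hF.closure_eq]
  exact union_subset (union_subset subset_union_left (h.trans subset_union_right))
    subset_union_right

theorem subset_or_subset_of_frontier_subset [PreconnectedSpace X] {P Q u v : Set X}
    (hP : IsOpen P) (hQ : IsOpen Q) (hPQ : Disjoint P Q) (hu : IsClosed u) (hv : IsClosed v)
    (huv : Disjoint u v) (hcover : (P ∪ Q)ᶜ ⊆ u ∪ v) (hPu : frontier P ⊆ u)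
    (hQv : frontier Q ⊆ v) : (P ∪ Q)ᶜ ⊆ u ∨ (P ∪ Q)ᶜ ⊆ v := by
  set B := (P ∪ Q)ᶜ
  have hB : IsClosed B := (hP.union hQ).isClosed_compl
  have hPB : frontier P ⊆ B := fun x hx => by
    have := (hPQ.closure_left hQ).notMem_of_mem_left (frontier_subset_closure hx)
    simp_all [B, hP.frontier_eq]
  have hQB : frontier Q ⊆ B := fun x hx => by
    have := (hPQ.symm.closure_left hP).notMem_of_mem_left (frontier_subset_closure hx)
    simp_all [B, hQ.frontier_eq]
  -- `P ∪ (B ∩ u)` and `Q ∪ (B ∩ v)` split the space into two closed sets.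
  have hS := isClosed_union_of_frontier_subset (hB.inter hu) (subset_inter hPB hPu)
  have hT := isClosed_union_of_frontier_subset (hB.inter hv) (subset_inter hQB hQv)
  have hST : P ∪ (B ∩ u) = (Q ∪ (B ∩ v))ᶜ := by
    ext x
    have := hPQ.notMem_of_mem_left (a := x)
    have := huv.notMem_of_mem_left (a := x)
    have := @hcover x
    simp only [B, mem_union, mem_inter_iff, mem_compl_iff] at *
    tauto
  rcases isClopen_iff.mp ⟨hS, hST ▸ hT.isOpen_compl⟩ with h | h
  · exact Or.inr fun x hx => (hcover hx).resolve_left fun hxu =>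
      (h.subset (Or.inr ⟨hx, hxu⟩) : x ∈ (∅ : Set X))
  · exact Or.inl fun x hx =>
      ((h.symm.subset (mem_univ x) : x ∈ P ∪ (B ∩ u)).resolve_left fun hxP => hx (Or.inl hxP)).2

theorem isPreconnected_compl_union_of_frontier_subset [PreconnectedSpace X] {U V K L : Set X}
    (hU : IsOpen U) (hV : IsOpen V) (hUV : Disjoint U V) (hK : IsPreconnected K)
    (hL : IsPreconnected L) (hUK : frontier U ⊆ K) (hVL : frontier V ⊆ L) (hKB : K ⊆ (U ∪ V)ᶜ)
    (hLB : L ⊆ (U ∪ V)ᶜ) :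
    IsPreconnected (U ∪ V)ᶜ := by
  rw [isPreconnected_iff_subset_of_fully_disjoint_closed (hU.union hV).isClosed_compl]
  intro u v hu hv hcover huv
  have side {M : Set X} (hM : IsPreconnected M) (hMB : M ⊆ (U ∪ V)ᶜ) : M ⊆ u ∨ M ⊆ v :=
    isPreconnected_iff_subset_of_disjoint_closed.mp hM u v hu hv (hMB.trans hcover)
      (by rw [huv.inter_eq, inter_empty])
  wlog hKu : K ⊆ u generalizing u v
  · exact (this v u hv hu (union_comm u v ▸ hcover) huv.symm (fun hM hMB => (side hM hMB).symm)
      ((side hK hKB).resolve_left hKu)).symm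
  rcases side hL hLB with hLu | hLv
  · simpa using subset_or_subset_of_frontier_subset (hU.union hV) isOpen_empty
      (disjoint_empty _) hu hv huv (by simpa using hcover)
      ((frontier_union_subset U V).trans (union_subset
        (inter_subset_left.trans (hUK.trans hKu)) (inter_subset_right.trans (hVL.trans hLu))))
      (by simp)
  · exact subset_or_subset_of_frontier_subset hU hV hUV hu hv huv hcover (hUK.trans hKu)
      (hVL.trans hLv)

theorem isPreconnected_compl_of_frontier_subset [PreconnectedSpace X] {U K : Set X} (hU : IsOpen U)
    (hK : IsPreconnected K) (hUK : frontier U ⊆ K) (hKU : K ⊆ Uᶜ) : IsPreconnected Uᶜ := by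
  simpa using isPreconnected_compl_union_of_frontier_subset hU isOpen_empty (disjoint_empty U) hK
    isPreconnected_empty hUK (by simp) (by simpa using hKU) (empty_subset _)

theorem isPreconnected_iInter_of_directed [T2Space X] {ι : Type*} [Nonempty ι] {K : ι → Set X}
    (hdir : Directed (· ⊇ ·) K) (hc : ∀ i, IsCompact (K i)) (hp : ∀ i, IsPreconnected (K i)) :
    IsPreconnected (⋂ i, K i) := by
  have hI : IsCompact (⋂ i, K i) :=
    (hc (Classical.arbitrary ι)).of_isClosed_subset (isClosed_iInter fun i => (hc i).isClosed)
      (iInter_subset K _)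
  rw [isPreconnected_iff_subset_of_fully_disjoint_closed hI.isClosed]
  intro u v hu hv hcover huv
  obtain ⟨U, V, hU, hV, hIU, hIV, hUV⟩ := SeparatedNhds.of_isCompact_isCompact
    (hI.inter_right hu) (hI.inter_right hv) (huv.mono inter_subset_right inter_subset_right)
  have hIUV : (⋂ i, K i) ⊆ U ∪ V := fun x hx =>
    (hcover hx).imp (fun h => hIU ⟨hx, h⟩) (fun h => hIV ⟨hx, h⟩)
  obtain ⟨i, hi⟩ := exists_subset_nhds_of_isCompact hdir hc
    fun x hx => (hU.union hV).mem_nhds (hIUV hx)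
  refine ((hp i).subset_or_subset hU hV hUV hi).imp (fun h x hx => ?_) (fun h x hx => ?_)
  · refine (hcover hx).resolve_right fun hxv => hUV.notMem_of_mem_left ?_ (hIV ⟨hx, hxv⟩)
    exact h (iInter_subset K i hx)
  · refine (hcover hx).resolve_left fun hxu => hUV.notMem_of_mem_right ?_ (hIU ⟨hx, hxu⟩)
    exact h (iInter_subset K i hx)

theorem IsHomeomorph.subset_image_left {Y : Type*} [TopologicalSpace Y] {h : X → Y}
    (hh : IsHomeomorph h) {P Q : Set X} {T : Set Y} {x : X} (hP : IsOpen P) (hQ : IsOpen Q)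
    (hPQ : Disjoint P Q) (hT : IsPreconnected T) (hTPQ : T ⊆ h '' (P ∪ Q)) (hx : x ∈ P)
    (hxT : h x ∈ T) : T ⊆ h '' P :=
  hT.subset_left_of_subset_union (hh.isOpenMap P hP) (hh.isOpenMap Q hQ)
    ((disjoint_image_iff hh.injective).mpr hPQ) (image_union h P Q ▸ hTPQ)
    ⟨h x, hxT, mem_image_of_mem h hx⟩

theorem subset_image_of_isotopy {Y : Type*} [TopologicalSpace Y] {H : ℝ × X → Y}
    (hH : Continuous H) (hHt : ∀ t, IsHomeomorph fun x => H (t, x)) {P Q : Set X} {T : Set Y}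
    (hP : IsOpen P) (hQ : IsOpen Q) (hPQ : Disjoint P Q) (hT : IsOpen T) (hTc : IsPreconnected T)
    (hTPQ : ∀ t ∈ Icc (0 : ℝ) 1, T ⊆ (fun x => H (t, x)) '' (P ∪ Q))
    (h0 : T ⊆ (fun x => H (0, x)) '' P) : T ⊆ (fun x => H (1, x)) '' P := by
  rcases T.eq_empty_or_nonempty with rfl | ⟨z, hz⟩
  · exact empty_subset _
  -- `[0, 1]` is covered by the open sets of times at which `T` meets the image of `P`, resp. `Q`,
  -- and no time lies in both since `T` is connected.
  let O (S : Set X) : Set ℝ := ⋃ x ∈ S, (fun t => H (t, x)) ⁻¹' T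
  have hO (S : Set X) : IsOpen (O S) :=
    isOpen_biUnion fun x _ => hT.preimage (hH.comp (continuous_id.prodMk continuous_const))
  have hcover : Icc (0 : ℝ) 1 ⊆ O P ∪ O Q := fun t ht => by
    obtain ⟨x, hx | hx, hxz⟩ := hTPQ t ht hz
    · exact Or.inl (mem_biUnion hx (by rwa [← hxz] at hz))
    · exact Or.inr (mem_biUnion hx (by rwa [← hxz] at hz))
  have hdisj : Icc (0 : ℝ) 1 ∩ (O P ∩ O Q) = ∅ := by
    refine eq_empty_of_forall_notMem fun t ⟨ht, hPt, hQt⟩ => ?_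
    simp only [O, mem_iUnion, mem_preimage] at hPt hQt
    obtain ⟨x, hx, hxT⟩ := hPt
    obtain ⟨y, hy, hyT⟩ := hQt
    have := (hHt t).subset_image_left hP hQ hPQ hTc (hTPQ t ht) hx hxT hyT
    exact hPQ.notMem_of_mem_left ((hHt t).injective.mem_set_image.mp this) hy
  obtain ⟨x, hx, hxz⟩ := h0 hz
  have h0P : (0 : ℝ) ∈ O P := mem_biUnion hx (by rwa [← hxz] at hz)
  rcases isPreconnected_iff_subset_of_disjoint.mp isPreconnected_Icc _ _ (hO P) (hO Q) hcover
    hdisj with h | h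
  · have h1 : (1 : ℝ) ∈ O P := h ⟨zero_le_one, le_rfl⟩
    simp only [O, mem_iUnion, mem_preimage] at h1
    obtain ⟨y, hy, hyT⟩ := h1
    exact (hHt 1).subset_image_left hP hQ hPQ hTc (hTPQ 1 ⟨zero_le_one, le_rfl⟩) hy hyT
  · exact absurd ⟨⟨le_rfl, zero_le_one⟩, h0P, h ⟨le_rfl, zero_le_one⟩⟩
      (hdisj ▸ notMem_empty (0 : ℝ))

theorem Homeomorph.disjoint_symm_image (h : X ≃ₜ X) {s : Set X} (hs : Disjoint (h '' s) s) :
    Disjoint (h.symm '' s) s := by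
  have := (disjoint_image_iff h.symm.injective).mpr hs.symm
  rwa [← image_comp, h.symm_comp_self, image_id] at this

end Topology

open scoped Pointwise in
theorem subset_theta {f : Equiv.Perm OpenAnn} {S A : Set OpenAnn} (hS : f '' S = S)
    (hSA : S ⊆ A) : S ⊆ Theta f A := by
  have hf : f ∈ MulAction.stabilizer (Equiv.Perm OpenAnn) S := by
    rwa [MulAction.mem_stabilizer_iff, ← image_smul]
  intro x hx
  refine mem_iInter.mpr fun n => image_mono hSA ?_
  have := MulAction.mem_stabilizer_iff.mp ((MulAction.stabilizer _ S).zpow_mem hf n)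
  rw [← image_smul] at this
  exact this.symm ▸ hx

theorem theta_symm (f : Equiv.Perm OpenAnn) (A : Set OpenAnn) : Theta f.symm A = Theta f A := by
  simp only [Theta, ← Equiv.Perm.inv_def, inv_zpow']
  exact neg_surjective.iInter_comp fun n => ⇑(f ^ n) '' A

theorem isPreconnected_theta_of_image_subset (g : OpenAnn ≃ₜ OpenAnn) {A B : Set OpenAnn}
    (hB : IsCompact B) (hBc : IsPreconnected B) (hgB : g '' B ⊆ B) (hAB : A ⊆ B)
    (hBA : B ∩ g '' B ⊆ A) : IsPreconnected (Theta g.toEquiv A) := by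
  let K (n : ℕ) : Set OpenAnn := g^[n] '' B
  have hsucc (n : ℕ) : K (n + 1) = g '' K n := by
    simp only [K, iterate_succ', image_comp]
  have hanti : Antitone K := antitone_nat_of_succ_le fun n => by
    simp only [K, iterate_succ, image_comp]
    exact image_mono hgB
  have hinv : g '' ⋂ n, K n = ⋂ n, K n := by
    simp only [image_iInter g.bijective, ← hsucc]
    exact hanti.iInter_nat_add 1
  have htheta : Theta g.toEquiv A = ⋂ n, K n := by
    refine Subset.antisymm (fun x hx => mem_iInter.mpr fun n => ?_) (subset_theta hinv ?_)
    · have := mem_iInter.mp hx n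
      rw [zpow_natCast, Equiv.Perm.coe_pow] at this
      exact image_mono hAB this
    · intro x hx
      have hK0 : K 0 = B := image_id B
      exact hBA ⟨hK0 ▸ iInter_subset K 0 hx, hK0 ▸ image_mono (iInter_subset K 0) (hinv.symm ▸ hx)⟩
  rw [htheta]
  exact isPreconnected_iInter_of_directed hanti.directed_ge
    (fun n => hB.image (g.continuous.iterate n))
    (fun n => hBc.image _ (g.continuous.iterate n).continuousOn)

theorem Bornology.IsBounded.image_of_continuous {X Y : Type*} [PseudoMetricSpace X] [ProperSpace X]
    [PseudoMetricSpace Y] {f : X → Y} (hf : Continuous f) {S : Set X} (hS : IsBounded S) :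
    IsBounded (f '' S) :=
  (hS.isCompact_closure.image hf).isBounded.subset (image_mono subset_closure)

theorem Homeomorph.isBounded_image_iff {X Y : Type*} [PseudoMetricSpace X] [ProperSpace X]
    [PseudoMetricSpace Y] [ProperSpace Y] (h : X ≃ₜ Y) {S : Set X} :
    IsBounded (h '' S) ↔ IsBounded S :=
  ⟨fun hS => h.symm_image_image S ▸ hS.image_of_continuous h.symm.continuous,
    (·.image_of_continuous h.continuous)⟩

instance : LocallyPathConnectedSpace (AddCircle (1 : ℝ)) :=
  (QuotientAddGroup.isQuotientMap_mk _).locallyPathConnectedSpace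

namespace OpenAnn

def upperEnd (c : ℝ) : Set OpenAnn := univ ×ˢ Ioi c

def lowerEnd (c : ℝ) : Set OpenAnn := univ ×ˢ Iio c

variable {c d : ℝ}

@[simp] theorem mem_upperEnd {z : OpenAnn} : z ∈ upperEnd c ↔ c < z.2 := by simp [upperEnd]

@[simp] theorem mem_lowerEnd {z : OpenAnn} : z ∈ lowerEnd c ↔ z.2 < c := by simp [lowerEnd]

theorem isOpen_upperEnd : IsOpen (upperEnd c) := isOpen_univ.prod isOpen_Ioi

theorem isOpen_lowerEnd : IsOpen (lowerEnd c) := isOpen_univ.prod isOpen_Iio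

theorem isPreconnected_upperEnd : IsPreconnected (upperEnd c) :=
  isPreconnected_univ.prod isPreconnected_Ioi

theorem isPreconnected_lowerEnd : IsPreconnected (lowerEnd c) :=
  isPreconnected_univ.prod isPreconnected_Iio

theorem upperEnd_subset (h : c ≤ d) : upperEnd d ⊆ upperEnd c := fun _ hz =>
  mem_upperEnd.mpr (h.trans_lt (mem_upperEnd.mp hz))

theorem lowerEnd_subset (h : c ≤ d) : lowerEnd c ⊆ lowerEnd d := fun _ hz =>
  mem_lowerEnd.mpr ((mem_lowerEnd.mp hz).trans_le h)

theorem disjoint_upperEnd_lowerEnd (h : d ≤ c) : Disjoint (upperEnd c) (lowerEnd d) :=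
  disjoint_left.mpr fun _ hc hd => (h.trans_lt (mem_upperEnd.mp hc)).not_gt (mem_lowerEnd.mp hd)

theorem isBounded_iff {S : Set OpenAnn} :
    IsBounded S ↔ BddAbove (Prod.snd '' S) ∧ BddBelow (Prod.snd '' S) := by
  rw [← isBounded_image_fst_and_snd, isBounded_iff_bddBelow_bddAbove (s := Prod.snd '' S),
    and_comm (a := BddBelow _)]
  exact and_iff_right Metric.isBounded_of_compactSpace

end OpenAnn

open OpenAnn

variable {S T : Set OpenAnn} {c : ℝ}

theorem UnbAbove.not_isBounded (h : UnbAbove S) : ¬IsBounded S := fun hS =>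
  h (isBounded_iff.mp hS).1

theorem UnbBelow.not_isBounded (h : UnbBelow S) : ¬IsBounded S := fun hS =>
  h (isBounded_iff.mp hS).2

theorem UnbAbove.mono (h : UnbAbove S) (hST : S ⊆ T) : UnbAbove T :=
  fun hT => h (hT.mono (image_mono hST))

theorem UnbBelow.mono (h : UnbBelow S) (hST : S ⊆ T) : UnbBelow T :=
  fun hT => h (hT.mono (image_mono hST))

theorem unbAbove_of_not_isBounded (hS : ¬IsBounded S) (hc : Disjoint S (lowerEnd c)) :
    UnbAbove S := fun ha =>
  hS (isBounded_iff.mpr ⟨ha, c, forall_mem_image.mpr fun _ hz =>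
    not_lt.mp fun h => hc.notMem_of_mem_left hz (mem_lowerEnd.mpr h)⟩)

theorem unbBelow_of_not_isBounded (hS : ¬IsBounded S) (hc : Disjoint S (upperEnd c)) :
    UnbBelow S := fun hb =>
  hS (isBounded_iff.mpr ⟨⟨c, forall_mem_image.mpr fun _ hz =>
    not_lt.mp fun h => hc.notMem_of_mem_left hz (mem_upperEnd.mpr h)⟩, hb⟩)

theorem UnbAbove.inter_upperEnd (h : UnbAbove S) (c : ℝ) : UnbAbove (S ∩ upperEnd c) := by
  rw [UnbAbove, not_bddAbove_iff] at h ⊢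
  intro d
  obtain ⟨_, ⟨z, hz, rfl⟩, hdz⟩ := h (max c d)
  exact ⟨z.2, ⟨z, ⟨hz, mem_upperEnd.mpr ((le_max_left c d).trans_lt hdz)⟩, rfl⟩,
    (le_max_right c d).trans_lt hdz⟩

theorem UnbBelow.inter_lowerEnd (h : UnbBelow S) (c : ℝ) : UnbBelow (S ∩ lowerEnd c) := by
  rw [UnbBelow, not_bddBelow_iff] at h ⊢
  intro d
  obtain ⟨_, ⟨z, hz, rfl⟩, hzd⟩ := h (min c d)
  exact ⟨z.2, ⟨z, ⟨hz, mem_lowerEnd.mpr (hzd.trans_le (min_le_left c d))⟩, rfl⟩,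
    hzd.trans_le (min_le_right c d)⟩

theorem UnbAbove.inter_upperEnd_nonempty (h : UnbAbove S) (c : ℝ) : (S ∩ upperEnd c).Nonempty :=
  nonempty_iff_ne_empty.mpr fun he => (h.inter_upperEnd c) (by simp [he])

theorem UnbBelow.inter_lowerEnd_nonempty (h : UnbBelow S) (c : ℝ) : (S ∩ lowerEnd c).Nonempty :=
  nonempty_iff_ne_empty.mpr fun he => (h.inter_lowerEnd c) (by simp [he])

theorem UnbAbove.nonempty (h : UnbAbove S) : S.Nonempty :=
  (h.inter_upperEnd_nonempty 0).mono inter_subset_left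

theorem UnbBelow.nonempty (h : UnbBelow S) : S.Nonempty :=
  (h.inter_lowerEnd_nonempty 0).mono inter_subset_left

section Ends

variable (h : OpenAnn ≃ₜ OpenAnn) {R : ℝ}

theorem UnbAbove.symm_image (hR : upperEnd R ⊆ h '' upperEnd 0) (hS : UnbAbove S) :
    UnbAbove (h.symm '' S) := by
  have hsub : h.symm '' (S ∩ upperEnd R) ⊆ upperEnd 0 := by
    rintro _ ⟨z, ⟨-, hz⟩, rfl⟩
    obtain ⟨w, hw, rfl⟩ := hR hz
    simpa using hw
  refine (unbAbove_of_not_isBounded ?_ ((disjoint_upperEnd_lowerEnd le_rfl).mono_left hsub)).mono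
    (image_mono inter_subset_left)
  rw [h.symm.isBounded_image_iff]
  exact (hS.inter_upperEnd R).not_isBounded

theorem UnbBelow.symm_image (hR : lowerEnd R ⊆ h '' lowerEnd 0) (hS : UnbBelow S) :
    UnbBelow (h.symm '' S) := by
  have hsub : h.symm '' (S ∩ lowerEnd R) ⊆ lowerEnd 0 := by
    rintro _ ⟨z, ⟨-, hz⟩, rfl⟩
    obtain ⟨w, hw, rfl⟩ := hR hz
    simpa using hw
  refine (unbBelow_of_not_isBounded ?_
    ((disjoint_upperEnd_lowerEnd le_rfl).symm.mono_left hsub)).mono (image_mono inter_subset_left)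
  rw [h.symm.isBounded_image_iff]
  exact (hS.inter_lowerEnd R).not_isBounded

/-- The high points of `S` cannot be sent low, since the low end is covered by the image of the
lower half of the annulus. -/
theorem UnbAbove.image (hR : lowerEnd R ⊆ h '' lowerEnd 0) (hS : UnbAbove S) :
    UnbAbove (h '' S) := by
  have hdisj : Disjoint (h '' (S ∩ upperEnd 0)) (lowerEnd R) := by
    rw [disjoint_right]
    rintro z hz ⟨w, ⟨-, hw⟩, hwz⟩
    obtain ⟨v, hv, rfl⟩ := hR hz
    exact (disjoint_upperEnd_lowerEnd le_rfl).notMem_of_mem_left hw (h.injective hwz ▸ hv)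
  refine (unbAbove_of_not_isBounded ?_ hdisj).mono (image_mono inter_subset_left)
  rw [h.isBounded_image_iff]
  exact (hS.inter_upperEnd 0).not_isBounded

theorem UnbBelow.image (hR : upperEnd R ⊆ h '' upperEnd 0) (hS : UnbBelow S) :
    UnbBelow (h '' S) := by
  have hdisj : Disjoint (h '' (S ∩ lowerEnd 0)) (upperEnd R) := by
    rw [disjoint_right]
    rintro z hz ⟨w, ⟨-, hw⟩, hwz⟩
    obtain ⟨v, hv, rfl⟩ := hR hz
    exact (disjoint_upperEnd_lowerEnd le_rfl).notMem_of_mem_left (h.injective hwz ▸ hv) hw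
  refine (unbBelow_of_not_isBounded ?_ hdisj).mono (image_mono inter_subset_left)
  rw [h.isBounded_image_iff]
  exact (hS.inter_lowerEnd 0).not_isBounded

end Ends

def PreservesEnds (g : OpenAnn → OpenAnn) : Prop :=
  (∀ S, UnbAbove S → UnbAbove (g '' S)) ∧ ∀ S, UnbBelow S → UnbBelow (g '' S)

theorem IsotopicToIdA.exists_subset_image {f : OpenAnn → OpenAnn} (hf : IsotopicToIdA f) :
    (∃ R, upperEnd R ⊆ f '' upperEnd 0) ∧ ∃ R, lowerEnd R ⊆ f '' lowerEnd 0 := by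
  obtain ⟨H, hH, H0, H1, hHt⟩ := hf
  set core : Set OpenAnn := H '' (Icc 0 1 ×ˢ (univ ×ˢ {0}))
  have hcore : IsCompact core :=
    (isCompact_Icc.prod (isCompact_univ.prod isCompact_singleton)).image hH
  have hH0 : (fun z => H (0, z)) = id := funext H0
  have hH1 : (fun z => H (1, z)) = f := funext H1
  have hsides {T : Set OpenAnn} (hT : Disjoint T core) :
      ∀ t ∈ Icc (0 : ℝ) 1, T ⊆ (fun z => H (t, z)) '' (upperEnd 0 ∪ lowerEnd 0) := by
    intro t ht z hz
    obtain ⟨w, rfl⟩ := (hHt t).surjective z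
    refine ⟨w, ?_, rfl⟩
    rcases lt_trichotomy w.2 0 with hw | hw | hw
    · exact Or.inr (mem_lowerEnd.mpr hw)
    · have : (t, w) ∈ Icc (0 : ℝ) 1 ×ˢ (univ ×ˢ ({0} : Set ℝ)) := ⟨ht, mem_univ _, hw⟩
      exact absurd (mem_image_of_mem H this) (hT.notMem_of_mem_left hz)
    · exact Or.inl (mem_upperEnd.mpr hw)
  obtain ⟨a, ha⟩ := (hcore.image continuous_snd).bddAbove
  obtain ⟨b, hb⟩ := (hcore.image continuous_snd).bddBelow
  have hup : Disjoint (upperEnd (max a 0)) core := disjoint_left.mpr fun z hz hzc =>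
    (ha (mem_image_of_mem _ hzc)).not_gt ((le_max_left a 0).trans_lt (mem_upperEnd.mp hz))
  have hlow : Disjoint (lowerEnd (min b 0)) core := disjoint_left.mpr fun z hz hzc =>
    (hb (mem_image_of_mem _ hzc)).not_gt ((mem_lowerEnd.mp hz).trans_le (min_le_left b 0))
  rw [← hH1]
  refine ⟨⟨max a 0, ?_⟩, ⟨min b 0, ?_⟩⟩
  · exact subset_image_of_isotopy hH hHt isOpen_upperEnd isOpen_lowerEnd
      (disjoint_upperEnd_lowerEnd le_rfl) isOpen_upperEnd isPreconnected_upperEnd (hsides hup)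
      (by simpa [hH0] using upperEnd_subset (le_max_right a 0))
  · exact subset_image_of_isotopy hH hHt isOpen_lowerEnd isOpen_upperEnd
      (disjoint_upperEnd_lowerEnd le_rfl).symm isOpen_lowerEnd isPreconnected_lowerEnd
      (fun t ht => union_comm (upperEnd 0) (lowerEnd 0) ▸ hsides hlow t ht)
      (by simpa [hH0] using lowerEnd_subset (min_le_right b 0))

theorem IsotopicToIdA.preservesEnds {h : OpenAnn ≃ₜ OpenAnn} (hf : IsotopicToIdA h) :
    PreservesEnds h ∧ PreservesEnds h.symm := by
  obtain ⟨⟨R, hR⟩, ⟨R', hR'⟩⟩ := hf.exists_subset_image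
  exact ⟨⟨fun _ => UnbAbove.image h hR', fun _ => UnbBelow.image h hR⟩,
    ⟨fun _ => UnbAbove.symm_image h hR, fun _ => UnbBelow.symm_image h hR'⟩⟩

section Essential

variable {γ UN US : Set OpenAnn}

theorem IsEssential.isCompact (he : IsEssential γ UN US) : IsCompact γ := by
  obtain ⟨⟨e, he, -, rfl⟩, -⟩ := he
  exact isCompact_range he

theorem IsEssential.isPreconnected (he : IsEssential γ UN US) : IsPreconnected γ := by
  obtain ⟨⟨e, he, -, rfl⟩, -⟩ := he
  exact isPreconnected_range he

theorem IsEssential.unbAbove_north (he : IsEssential γ UN US) : UnbAbove UN := he.2.2.2.1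

theorem IsEssential.unbBelow_south (he : IsEssential γ UN US) : UnbBelow US := he.2.2.2.2.1

theorem IsEssential.isPreconnected_north (he : IsEssential γ UN US) : IsPreconnected UN := by
  obtain ⟨-, ⟨x, -, rfl⟩, -⟩ := he
  exact isPreconnected_connectedComponentIn

theorem IsEssential.isPreconnected_south (he : IsEssential γ UN US) : IsPreconnected US := by
  obtain ⟨-, -, ⟨x, -, rfl⟩, -⟩ := he
  exact isPreconnected_connectedComponentIn

theorem IsEssential.isOpen_north (he : IsEssential γ UN US) : IsOpen UN := by
  have hγ := he.isCompact.isClosed.isOpen_compl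
  obtain ⟨-, ⟨x, -, rfl⟩, -⟩ := he
  exact hγ.connectedComponentIn

theorem IsEssential.isOpen_south (he : IsEssential γ UN US) : IsOpen US := by
  have hγ := he.isCompact.isClosed.isOpen_compl
  obtain ⟨-, -, ⟨x, -, rfl⟩, -⟩ := he
  exact hγ.connectedComponentIn

theorem IsEssential.north_subset_compl (he : IsEssential γ UN US) : UN ⊆ γᶜ := by
  obtain ⟨-, ⟨x, -, rfl⟩, -⟩ := he
  exact connectedComponentIn_subset _ _

theorem IsEssential.south_subset_compl (he : IsEssential γ UN US) : US ⊆ γᶜ := by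
  obtain ⟨-, -, ⟨x, -, rfl⟩, -⟩ := he
  exact connectedComponentIn_subset _ _

theorem IsEssential.frontier_north_subset (he : IsEssential γ UN US) : frontier UN ⊆ γ := by
  have hγ := he.isCompact.isClosed.isOpen_compl
  obtain ⟨-, ⟨x, -, rfl⟩, -⟩ := he
  simpa using frontier_connectedComponentIn_subset hγ x

theorem IsEssential.frontier_south_subset (he : IsEssential γ UN US) : frontier US ⊆ γ := by
  have hγ := he.isCompact.isClosed.isOpen_compl
  obtain ⟨-, -, ⟨x, -, rfl⟩, -⟩ := he
  simpa using frontier_connectedComponentIn_subset hγ x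

theorem IsEssential.disjoint_north_south (he : IsEssential γ UN US) : Disjoint UN US := by
  obtain ⟨-, ⟨x, -, rfl⟩, ⟨y, -, rfl⟩, -, -, hne, -⟩ := he
  refine disjoint_left.mpr fun z hzx hzy => hne ?_
  rw [connectedComponentIn_eq hzx, connectedComponentIn_eq hzy]

theorem IsEssential.subset_north_of_mem (he : IsEssential γ UN US) {y : OpenAnn}
    (hS : IsPreconnected S) (hSγ : S ⊆ γᶜ) (hyS : y ∈ S) (hy : y ∈ UN) : S ⊆ UN := by
  obtain ⟨-, ⟨x, -, rfl⟩, -⟩ := he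
  exact subset_connectedComponentIn_of_mem hS hSγ hyS hy

theorem IsEssential.subset_south_of_mem (he : IsEssential γ UN US) {y : OpenAnn}
    (hS : IsPreconnected S) (hSγ : S ⊆ γᶜ) (hyS : y ∈ S) (hy : y ∈ US) : S ⊆ US := by
  obtain ⟨-, -, ⟨x, -, rfl⟩, -⟩ := he
  exact subset_connectedComponentIn_of_mem hS hSγ hyS hy

theorem IsEssential.exists_upperEnd_subset_north (he : IsEssential γ UN US) :
    ∃ c, upperEnd c ⊆ UN := by
  obtain ⟨c, hc⟩ := (he.isCompact.image continuous_snd).bddAbove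
  have hγ : upperEnd c ⊆ γᶜ := fun z hz hzγ =>
    (hc (mem_image_of_mem _ hzγ)).not_gt (mem_upperEnd.mp hz)
  obtain ⟨y, hyN, hy⟩ := he.unbAbove_north.inter_upperEnd_nonempty c
  exact ⟨c, he.subset_north_of_mem isPreconnected_upperEnd hγ hy hyN⟩

theorem IsEssential.exists_lowerEnd_subset_south (he : IsEssential γ UN US) :
    ∃ c, lowerEnd c ⊆ US := by
  obtain ⟨c, hc⟩ := (he.isCompact.image continuous_snd).bddBelow
  have hγ : lowerEnd c ⊆ γᶜ := fun z hz hzγ =>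
    (hc (mem_image_of_mem _ hzγ)).not_gt (mem_lowerEnd.mp hz)
  obtain ⟨y, hyS, hy⟩ := he.unbBelow_south.inter_lowerEnd_nonempty c
  exact ⟨c, he.subset_south_of_mem isPreconnected_lowerEnd hγ hy hyS⟩

theorem IsEssential.subset_north (he : IsEssential γ UN US) (hS : IsPreconnected S)
    (hSγ : S ⊆ γᶜ) (hSu : UnbAbove S) : S ⊆ UN := by
  obtain ⟨c, hc⟩ := he.exists_upperEnd_subset_north
  obtain ⟨y, hyS, hy⟩ := hSu.inter_upperEnd_nonempty c
  exact he.subset_north_of_mem hS hSγ hyS (hc hy)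

theorem IsEssential.subset_south (he : IsEssential γ UN US) (hS : IsPreconnected S)
    (hSγ : S ⊆ γᶜ) (hSu : UnbBelow S) : S ⊆ US := by
  obtain ⟨c, hc⟩ := he.exists_lowerEnd_subset_south
  obtain ⟨y, hyS, hy⟩ := hSu.inter_lowerEnd_nonempty c
  exact he.subset_south_of_mem hS hSγ hyS (hc hy)

theorem IsEssential.isBounded_of_ne (he : IsEssential γ UN US) {z : OpenAnn} (hz : z ∈ γᶜ)
    (hN : connectedComponentIn γᶜ z ≠ UN) (hS : connectedComponentIn γᶜ z ≠ US) :
    IsBounded (connectedComponentIn γᶜ z) := by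
  obtain ⟨-, -, -, -, -, -, hclass⟩ := he
  rw [isBounded_iff, ← not_not (a := BddAbove _), ← not_not (a := BddBelow _), ← not_or]
  exact fun hunb => (hclass _ ⟨z, hz, rfl⟩ hunb).elim hN hS

theorem IsEssential.isPreconnected_compl_north (he : IsEssential γ UN US) :
    IsPreconnected UNᶜ :=
  isPreconnected_compl_of_frontier_subset he.isOpen_north he.isPreconnected he.frontier_north_subset
    (subset_compl_comm.mp he.north_subset_compl)

theorem IsEssential.isPreconnected_compl_south (he : IsEssential γ UN US) :
    IsPreconnected USᶜ :=
  isPreconnected_compl_of_frontier_subset he.isOpen_south he.isPreconnected he.frontier_south_subset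
    (subset_compl_comm.mp he.south_subset_compl)

theorem IsEssential.frontier_north_nonempty (he : IsEssential γ UN US) :
    (frontier UN).Nonempty := by
  obtain ⟨z, hz⟩ := he.unbBelow_south.nonempty
  exact nonempty_frontier_iff.mpr ⟨he.unbAbove_north.nonempty,
    fun h => he.disjoint_north_south.notMem_of_mem_right hz (h ▸ mem_univ z)⟩

theorem IsEssential.frontier_south_nonempty (he : IsEssential γ UN US) :
    (frontier US).Nonempty := by
  obtain ⟨z, hz⟩ := he.unbAbove_north.nonempty
  exact nonempty_frontier_iff.mpr ⟨he.unbBelow_south.nonempty,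
    fun h => he.disjoint_north_south.notMem_of_mem_left hz (h ▸ mem_univ z)⟩

theorem IsEssential.image_subset_north (he : IsEssential γ UN US) {h : OpenAnn → OpenAnn}
    (hc : Continuous h) (hN : h '' UN ⊆ UN) (hγ : Disjoint (h '' γ) γ) : h '' γ ⊆ UN := by
  obtain ⟨x, hx⟩ := he.frontier_north_nonempty
  have hxγ : h x ∈ h '' γ := mem_image_of_mem h (he.frontier_north_subset hx)
  have hxN : h x ∈ closure UN := closure_mono hN
    (image_closure_subset_closure_image hc (mem_image_of_mem h (frontier_subset_closure hx)))
  rw [closure_eq_self_union_frontier] at hxN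
  refine he.subset_north_of_mem (he.isPreconnected.image h hc.continuousOn) hγ.subset_compl_right
    hxγ (hxN.resolve_right fun hx' => hγ.notMem_of_mem_left hxγ (he.frontier_north_subset hx'))

/-- For a bounded component `C` of `γᶜ`, the frontier of `h '' C` lies in `h '' γ ⊆ U`, so the
connected set `Uᶜ` is either inside `h '' C` or disjoint from it; the former is impossible as `Uᶜ`
is unbounded. -/
theorem IsEssential.image_compl_union_subset (he : IsEssential γ UN US) (h : OpenAnn ≃ₜ OpenAnn)
    {U : Set OpenAnn} (hU : IsPreconnected Uᶜ) (hUb : ¬IsBounded Uᶜ) (hγ : h '' γ ⊆ U) :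
    h '' (UN ∪ US)ᶜ ⊆ U := by
  rintro _ ⟨z, hz, rfl⟩
  by_cases hzγ : z ∈ γ
  · exact hγ (mem_image_of_mem h hzγ)
  have hγo : IsOpen γᶜ := he.isCompact.isClosed.isOpen_compl
  have hzC : z ∈ connectedComponentIn γᶜ z := mem_connectedComponentIn hzγ
  have hCb : IsBounded (connectedComponentIn γᶜ z) := he.isBounded_of_ne hzγ
    (fun hC => hz (Or.inl (hC ▸ hzC))) (fun hC => hz (Or.inr (hC ▸ hzC)))
  have hfr : Disjoint Uᶜ (frontier (h '' connectedComponentIn γᶜ z)) := by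
    rw [← h.image_frontier]
    refine disjoint_compl_left.mono_right ((image_mono ?_).trans hγ)
    simpa using frontier_connectedComponentIn_subset hγo z
  rcases hU.subset_or_disjoint_of_disjoint_frontier (h.isOpenMap _ hγo.connectedComponentIn) hfr
    with hsub | hdisj
  · exact absurd ((h.isBounded_image_iff.mpr hCb).subset hsub) hUb
  · by_contra hzU
    exact hdisj.notMem_of_mem_left hzU (mem_image_of_mem h hzC)

variable {γ' UN' US' : Set OpenAnn}

theorem IsEssential.subset_north_of_subset_south (he : IsEssential γ UN US)
    (he' : IsEssential γ' UN' US') (hd : Disjoint γ γ') (h : γ' ⊆ US) : γ ⊆ UN' := by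
  have hcl : closure UN ⊆ γ'ᶜ := by
    rw [closure_eq_self_union_frontier]
    exact union_subset (fun z hz hz' => he.disjoint_north_south.notMem_of_mem_left hz (h hz'))
      (he.frontier_north_subset.trans hd.subset_compl_right)
  have hclN : closure UN ⊆ UN' := he'.subset_north he.isPreconnected_north.closure hcl
    (he.unbAbove_north.mono subset_closure)
  obtain ⟨x, hx⟩ := he.frontier_north_nonempty
  exact he'.subset_north_of_mem he.isPreconnected hd.subset_compl_right
    (he.frontier_north_subset hx) (hclN (frontier_subset_closure hx))

theorem IsEssential.subset_south_of_subset_north (he : IsEssential γ UN US)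
    (he' : IsEssential γ' UN' US') (hd : Disjoint γ γ') (h : γ' ⊆ UN) : γ ⊆ US' := by
  have hcl : closure US ⊆ γ'ᶜ := by
    rw [closure_eq_self_union_frontier]
    exact union_subset (fun z hz hz' => he.disjoint_north_south.notMem_of_mem_right hz (h hz'))
      (he.frontier_south_subset.trans hd.subset_compl_right)
  have hclS : closure US ⊆ US' := he'.subset_south he.isPreconnected_south.closure hcl
    (he.unbBelow_south.mono subset_closure)
  obtain ⟨x, hx⟩ := he.frontier_south_nonempty
  exact he'.subset_south_of_mem he.isPreconnected hd.subset_compl_right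
    (he.frontier_south_subset hx) (hclS (frontier_subset_closure hx))

end Essential

section Region

variable {γ UN US γ' UN' US' : Set OpenAnn}

theorem IsEssential.isCompact_compl_union (he : IsEssential γ UN US)
    (he' : IsEssential γ' UN' US') : IsCompact (UN ∪ US')ᶜ := by
  obtain ⟨c, hc⟩ := he.exists_upperEnd_subset_north
  obtain ⟨d, hd⟩ := he'.exists_lowerEnd_subset_south
  refine Metric.isCompact_of_isClosed_isBounded
    (he.isOpen_north.union he'.isOpen_south).isClosed_compl (isBounded_iff.mpr ⟨⟨c, ?_⟩, ⟨d, ?_⟩⟩)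
  · rintro _ ⟨z, hz, rfl⟩
    exact not_lt.mp fun h => hz (Or.inl (hc (mem_upperEnd.mpr h)))
  · rintro _ ⟨z, hz, rfl⟩
    exact not_lt.mp fun h => hz (Or.inr (hd (mem_lowerEnd.mpr h)))

theorem IsEssential.isPreconnected_compl_union (he : IsEssential γ UN US)
    (he' : IsEssential γ' UN' US') (hd : Disjoint γ γ') (h : γ' ⊆ US) :
    IsPreconnected (UN ∪ US')ᶜ := by
  have hγ : γ ⊆ UN' := he.subset_north_of_subset_south he' hd h
  have hS : US' ⊆ US := he.subset_south he'.isPreconnected_south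
    (fun z hz hzγ => he'.disjoint_north_south.notMem_of_mem_left (hγ hzγ) hz) he'.unbBelow_south
  refine isPreconnected_compl_union_of_frontier_subset he.isOpen_north he'.isOpen_south
    (he.disjoint_north_south.mono_right hS) he.isPreconnected he'.isPreconnected
    he.frontier_north_subset he'.frontier_south_subset ?_ ?_
  · rw [compl_union]
    exact subset_inter (subset_compl_comm.mp he.north_subset_compl)
      fun z hz hzS => he'.disjoint_north_south.notMem_of_mem_right hzS (hγ hz)
  · rw [compl_union]
    exact subset_inter (fun z hz hzN => he.disjoint_north_south.notMem_of_mem_left hzN (h hz))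
      (subset_compl_comm.mp he'.south_subset_compl)

theorem IsEssential.closure_inter_subset_compl_union (he : IsEssential γ UN US)
    (he' : IsEssential γ' UN' US') : closure (US ∩ UN') ⊆ (UN ∪ US')ᶜ := by
  refine closure_minimal (fun z hz hzB => ?_)
    (he.isOpen_north.union he'.isOpen_south).isClosed_compl
  rcases hzB with hzN | hzS'
  · exact he.disjoint_north_south.notMem_of_mem_left hzN hz.1
  · exact he'.disjoint_north_south.notMem_of_mem_right hzS' hz.2

end Region

section Dynamics

variable {γ UN US γ' UN' US' : Set OpenAnn} (g : OpenAnn ≃ₜ OpenAnn)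

theorem IsEssential.symm_image_north_subset (he : IsEssential γ UN US)
    (hg : PreservesEnds g.symm) (hγ : g '' γ ⊆ US) : g.symm '' UN ⊆ UN := by
  refine he.subset_north (he.isPreconnected_north.image _ g.symm.continuous.continuousOn) ?_
    (hg.1 _ he.unbAbove_north)
  rintro _ ⟨u, hu, rfl⟩ hγu
  exact he.disjoint_north_south.notMem_of_mem_left hu (by simpa using hγ (mem_image_of_mem g hγu))

theorem IsEssential.symm_image_south_subset (he : IsEssential γ UN US)
    (hg : PreservesEnds g.symm) (hγ : g '' γ ⊆ UN) : g.symm '' US ⊆ US := by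
  refine he.subset_south (he.isPreconnected_south.image _ g.symm.continuous.continuousOn) ?_
    (hg.2 _ he.unbBelow_south)
  rintro _ ⟨u, hu, rfl⟩ hγu
  exact he.disjoint_north_south.notMem_of_mem_right hu (by simpa using hγ (mem_image_of_mem g hγu))

theorem IsEssential.mapsTo_compl_union (he : IsEssential γ UN US) (he' : IsEssential γ' UN' US')
    (hg : PreservesEnds g) (hg' : PreservesEnds g.symm) (hfree' : Disjoint (g '' γ') γ')
    (hattr : g '' γ ⊆ US) (hrep : g.symm '' γ' ⊆ US') : MapsTo g (UN ∪ US')ᶜ (UN ∪ US')ᶜ := by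
  have hN' : g '' UN' ⊆ UN' := he'.symm_image_north_subset g.symm hg hrep
  have hS' : g.symm '' US' ⊆ US' :=
    he'.symm_image_south_subset g hg' (he'.image_subset_north g.continuous hN' hfree')
  have hN : g.symm '' UN ⊆ UN := he.symm_image_north_subset g hg' hattr
  rintro z hz (hgz | hgz)
  · exact hz (Or.inl (by simpa using hN (mem_image_of_mem _ hgz)))
  · exact hz (Or.inr (by simpa using hS' (mem_image_of_mem _ hgz)))

theorem IsEssential.inter_image_subset (he : IsEssential γ UN US) (he' : IsEssential γ' UN' US')
    (hg' : PreservesEnds g.symm) (hfree : Disjoint (g '' γ) γ) (hattr : g '' γ ⊆ US)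
    (hrep : g.symm '' γ' ⊆ US') : (UN ∪ US')ᶜ ∩ g '' (UN ∪ US')ᶜ ⊆ US ∩ UN' := by
  have hγ : g.symm '' γ ⊆ UN := he.image_subset_north g.symm.continuous
    (he.symm_image_north_subset g hg' hattr) (g.disjoint_symm_image hfree)
  have hN := he.image_compl_union_subset g.symm he.isPreconnected_compl_north
    (he.unbBelow_south.mono he.disjoint_north_south.subset_compl_left).not_isBounded hγ
  have hS' := he'.image_compl_union_subset g.symm he'.isPreconnected_compl_south
    (he'.unbAbove_north.mono he'.disjoint_north_south.subset_compl_right).not_isBounded hrep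
  rintro _ ⟨hzB, w, hwB, rfl⟩
  refine ⟨not_not.mp fun hzS => hwB (Or.inl ?_), not_not.mp fun hzN' => hwB (Or.inr ?_)⟩
  · simpa using hN ⟨g w, fun h => h.elim (hzB ∘ Or.inl) hzS, rfl⟩
  · simpa using hS' ⟨g w, fun h => h.elim hzN' (hzB ∘ Or.inr), rfl⟩

end Dynamics

theorem isPreconnected_theta_of_subset_south {γ UN US γ' UN' US' : Set OpenAnn}
    (g : OpenAnn ≃ₜ OpenAnn) (hg : PreservesEnds g) (hg' : PreservesEnds g.symm)
    (he : IsEssential γ UN US) (he' : IsEssential γ' UN' US') (hd : Disjoint γ γ')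
    (hfree : Disjoint (g '' γ) γ) (hfree' : Disjoint (g '' γ') γ') (hattr : g '' γ ⊆ US)
    (hrep : g.symm '' γ' ⊆ US') (h : γ' ⊆ US) :
    IsPreconnected (Theta g.toEquiv (closure (US ∩ UN'))) :=
  isPreconnected_theta_of_image_subset g (he.isCompact_compl_union he')
    (he.isPreconnected_compl_union he' hd h)
    (he.mapsTo_compl_union g he' hg hg' hfree' hattr hrep).image_subset
    (he.closure_inter_subset_compl_union he')
    ((he.inter_image_subset g he' hg' hfree hattr hrep).trans subset_closure)

/-- **Lemma 5.1.** If `γ` and `γ'` are disjoint `f`-free essential Jordan curves, `γ` attracting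
and `γ'` repulsing, then the maximal invariant set of the closed annulus delimited by `γ` and
`γ'` is a connected set. -/
theorem maximal_invariant_set_connected_of_attracting_repulsing
    (f : Equiv.Perm OpenAnn) (hfc : Continuous f) (hfc' : Continuous f.symm)
    (hfI : IsotopicToIdA f)
    (γ UN US γ' UN' US' : Set OpenAnn)
    (he : IsEssential γ UN US) (he' : IsEssential γ' UN' US')
    (hd : Disjoint γ γ')
    (hfree : (f '' γ) ∩ γ = ∅) (hfree' : (f '' γ') ∩ γ' = ∅)
    (hattr : f '' γ ⊆ US) (hrep : f.symm '' γ' ⊆ US')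
    (A : Set OpenAnn)
    (hA : (γ' ⊆ US ∧ A = closure (US ∩ UN')) ∨ (γ' ⊆ UN ∧ A = closure (UN ∩ US'))) :
    IsPreconnected (Theta f A) := by
  let G : OpenAnn ≃ₜ OpenAnn := ⟨f, hfc, hfc'⟩
  obtain ⟨hG, hG'⟩ := IsotopicToIdA.preservesEnds (h := G) hfI
  have hfreeG : Disjoint (G '' γ) γ := disjoint_iff_inter_eq_empty.mpr hfree
  have hfreeG' : Disjoint (G '' γ') γ' := disjoint_iff_inter_eq_empty.mpr hfree'
  rcases hA with ⟨h, rfl⟩ | ⟨h, rfl⟩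
  · exact isPreconnected_theta_of_subset_south G hG hG' he he' hd hfreeG hfreeG' hattr hrep h
  · rw [← theta_symm, inter_comm]
    exact isPreconnected_theta_of_subset_south G.symm hG' hG he' he hd.symm
      (G.disjoint_symm_image hfreeG') (G.disjoint_symm_image hfreeG) hrep hattr
      (he.subset_south_of_subset_north he' hd h)
end
end

section
/- Assume hypotheses (H₁), (H₂), (H₃) hold for f̃ and the horizontal lines Γ₀, Γ₁, Γ₂. Then for each i ∈ {0,1}, ρ_{Ã_i}(f̃) ⊆ Conv(ρ_{Θ(Ã_i)}(f̃)), the convex hull of ρ_{Θ(Ã_i)}(f̃). In particular, ρ_{Ã₀}(f̃) ⊆ (0,+∞) and ρ_{Ã₁}(f̃) ⊆ (−∞,0). -/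
open Set Function Topology

noncomputable section

/-- `g` is isotopic to the identity (in particular orientation preserving). -/
def IsotopicToIdP (g : ℝ × ℝ → ℝ × ℝ) : Prop :=
  ∃ H : ℝ × (ℝ × ℝ) → ℝ × ℝ, Continuous H ∧ (∀ z, H (0, z) = z) ∧ (∀ z, H (1, z) = g z) ∧
    ∀ t : ℝ, IsHomeomorph fun z => H (t, z)

/-- The closed horizontal band `ℝ × [b, a]`. -/
def BandAB (a b : ℝ) : Set (ℝ × ℝ) := {p | b ≤ p.2 ∧ p.2 ≤ a}

/-- The horizontal line `Γ = ℝ × {c}`. -/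
def Horiz (c : ℝ) : Set (ℝ × ℝ) := {p | p.2 = c}

/-- The maximal `f̃`-invariant subset `Θ(Ẽ) = ⋂_{n ∈ ℤ} f̃ⁿ(Ẽ)`. -/
def ThetaZ (ftil : Equiv.Perm (ℝ × ℝ)) (E : Set (ℝ × ℝ)) : Set (ℝ × ℝ) :=
  ⋂ n : ℤ, (ftil ^ n) '' E

/-- The rotation set `ρ_{K̃}(f̃)` of a set `K̃ ⊆ ℝ²`. -/
def rhoB (ftil : Equiv.Perm (ℝ × ℝ)) (K : Set (ℝ × ℝ)) : Set EReal :=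
  ⋂ (m : ℕ), ⋂ (_ : 1 ≤ m), closure (⋃ (n : ℕ), ⋃ (_ : m ≤ n),
    {x : EReal | ∃ zt ∈ K, (ftil ^ n) zt ∈ K ∧
      x = (((((ftil ^ n) zt).1 - zt.1) / n : ℝ) : EReal)})

/-- The unstable set `Λ⁻` of the band `ℝ × [b, a]`. -/
def LamM (ftil : Equiv.Perm (ℝ × ℝ)) (a b : ℝ) : Set (ℝ × ℝ) :=
  ⋂ n : ℕ, ((ftil ^ n) '' {p : ℝ × ℝ | p.2 ≤ a} ∩ {p : ℝ × ℝ | b ≤ p.2})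

/-- The stable set `Λ⁺` of the band `ℝ × [b, a]`. -/
def LamP (ftil : Equiv.Perm (ℝ × ℝ)) (a b : ℝ) : Set (ℝ × ℝ) :=
  ⋂ n : ℕ, ({p : ℝ × ℝ | p.2 ≤ a} ∩ (ftil ^ n) ⁻¹' {p : ℝ × ℝ | b ≤ p.2})

/-- The convex hull of a subset of `ℝ̄ = EReal`. -/
def erealHull (S : Set EReal) : Set EReal := ⋃ a ∈ S, ⋃ b ∈ S, Icc a b

/-!
Both lines `Γ₁, Γ₂` are pushed down by `f̃` while `Θ(Ã₀)`, `Θ(Ã₁)` contain points whose images stay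
above them; since `y ∘ f̃⁻¹` is continuous on the connected upper half-planes, `f̃` maps each closed
lower half-plane `{y ≤ c_j}` into the open one (for `c₀`, otherwise `f̃⁻¹` would push a whole upper
half-plane into `Ã₀`, on which `y ∘ f̃` is bounded). So an orbit segment that starts and ends in a
band `Ã` stays in `Ã`.

Everything is `T`-periodic and `Ã` is compact modulo `T`. The maximal displacement `βₙ` of `f̃ⁿ`
over `Θ(Ã)` is subadditive, so `βₙ / n` converges to some `β`, realised along points of `Θ(Ã)`,
hence `β ∈ ρ_{Θ(Ã)}(f̃)`. By compactness, the points of a long orbit segment in `Ã` that are far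
from both ends lie in a neighbourhood of `Θ(Ã)` on which the displacement of `f̃ʳ` is below
`r (β + ε)`; cutting the segment into blocks of length `r` shows `ρ_{Ã}(f̃) ≤ β`. The lower bound
is the same argument for the opposite displacement.
-/

open Filter

namespace AnnulusLift

variable {f : Equiv.Perm (ℝ × ℝ)}

lemma deckT_zpow_apply (m : ℤ) (z : ℝ × ℝ) : (deckT ^ m) z = (z.1 + m, z.2) := by
  induction m using Int.induction_on generalizing z with
  | zero => simp
  | succ m ih =>
    rw [zpow_add_one, Equiv.Perm.mul_apply, ih]
    simp only [deckT, Equiv.coe_fn_mk, Prod.mk.injEq, Int.cast_add, Int.cast_one, and_true]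
    ring
  | pred m ih =>
    rw [zpow_sub_one, Equiv.Perm.mul_apply, ih]
    simp only [deckT, Equiv.Perm.inv_def, Equiv.symm_mk, Equiv.coe_fn_mk, Prod.mk.injEq,
      Int.cast_sub, Int.cast_one, and_true]
    ring

lemma exists_deckT_zpow_mem_strip (z : ℝ × ℝ) :
    ∃ m : ℤ, (deckT ^ m) z ∈ Prod.fst ⁻¹' Icc (0 : ℝ) 1 := by
  refine ⟨-⌊z.1⌋, ?_⟩
  rw [deckT_zpow_apply, mem_preimage, Int.cast_neg, ← sub_eq_add_neg]
  exact ⟨Int.fract_nonneg z.1, (Int.fract_lt_one z.1).le⟩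

lemma isCompact_band_inter_strip (a b : ℝ) :
    IsCompact (BandAB a b ∩ Prod.fst ⁻¹' Icc (0 : ℝ) 1) := by
  convert (isCompact_Icc (a := (0 : ℝ)) (b := 1)).prod (isCompact_Icc (a := b) (b := a)) using 1
  ext z
  simp only [BandAB, mem_inter_iff, mem_ofPred_eq, mem_preimage, mem_prod, mem_Icc]
  tauto

lemma apply_deckT_zpow (hT : Commute f deckT) (m : ℤ) (z : ℝ × ℝ) :
    f ((deckT ^ m) z) = (deckT ^ m) (f z) :=
  DFunLike.congr_fun (hT.zpow_right m).eq z

lemma zpow_apply_deckT_zpow (hT : Commute f deckT) (i m : ℤ) (z : ℝ × ℝ) :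
    (f ^ i) ((deckT ^ m) z) = (deckT ^ m) ((f ^ i) z) :=
  DFunLike.congr_fun ((hT.zpow_zpow i m).eq) z

lemma continuous_zpow (hc : Continuous f) (hc' : Continuous f.symm) (i : ℤ) :
    Continuous (f ^ i) := by
  induction i using Int.induction_on with
  | zero => exact continuous_id
  | succ i ih => rw [zpow_add_one, Equiv.Perm.coe_mul]; exact ih.comp hc
  | pred i ih => rw [zpow_sub_one, Equiv.Perm.coe_mul]; exact ih.comp hc'

lemma zpow_apply_pow_apply {i : ℤ} {j : ℕ} (h : 0 ≤ i + j) (z : ℝ × ℝ) :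
    (f ^ i) ((f ^ j) z) = (f ^ (i + j).toNat) z := by
  rw [← Equiv.Perm.mul_apply, ← zpow_natCast f j, ← zpow_add, ← zpow_natCast,
    Int.toNat_of_nonneg h]

def IsDeckInvariant (g : ℝ × ℝ → ℝ) : Prop :=
  ∀ (m : ℤ) (z : ℝ × ℝ), g ((deckT ^ m) z) = g z

lemma deckT_zpow_apply_mem_band {a b : ℝ} {z : ℝ × ℝ} (m : ℤ) (hz : z ∈ BandAB a b) :
    (deckT ^ m) z ∈ BandAB a b := by
  rwa [deckT_zpow_apply]

lemma isClosed_band (a b : ℝ) : IsClosed (BandAB a b) :=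
  (isClosed_le continuous_const continuous_snd).inter (isClosed_le continuous_snd continuous_const)

lemma mem_thetaZ_iff {E : Set (ℝ × ℝ)} {z : ℝ × ℝ} :
    z ∈ ThetaZ f E ↔ ∀ i : ℤ, (f ^ i) z ∈ E := by
  simp only [ThetaZ, mem_iInter, mem_image_equiv, ← Equiv.Perm.inv_def, ← zpow_neg]
  exact (neg_surjective.forall (p := fun i : ℤ => (f ^ i) z ∈ E)).symm

lemma thetaZ_subset (E : Set (ℝ × ℝ)) : ThetaZ f E ⊆ E := fun _ hz => by
  simpa using mem_thetaZ_iff.1 hz 0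

lemma zpow_apply_mem_thetaZ {E : Set (ℝ × ℝ)} {z : ℝ × ℝ} (hz : z ∈ ThetaZ f E) (i : ℤ) :
    (f ^ i) z ∈ ThetaZ f E :=
  mem_thetaZ_iff.2 fun j => by
    rw [← Equiv.Perm.mul_apply, ← zpow_add]
    exact mem_thetaZ_iff.1 hz _

lemma pow_apply_mem_thetaZ {E : Set (ℝ × ℝ)} {z : ℝ × ℝ} (hz : z ∈ ThetaZ f E) (n : ℕ) :
    (f ^ n) z ∈ ThetaZ f E := by
  simpa using zpow_apply_mem_thetaZ hz n

lemma isClosed_thetaZ (hc : Continuous f) (hc' : Continuous f.symm) {E : Set (ℝ × ℝ)}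
    (hE : IsClosed E) : IsClosed (ThetaZ f E) := by
  have : ThetaZ f E = ⋂ i : ℤ, (f ^ i) ⁻¹' E := by ext; simp [mem_thetaZ_iff]
  rw [this]
  exact isClosed_iInter fun i => hE.preimage (continuous_zpow hc hc' i)

lemma deckT_zpow_apply_mem_thetaZ (hT : Commute f deckT) {a b : ℝ} {z : ℝ × ℝ} (m : ℤ)
    (hz : z ∈ ThetaZ f (BandAB a b)) : (deckT ^ m) z ∈ ThetaZ f (BandAB a b) :=
  mem_thetaZ_iff.2 fun i => by
    rw [zpow_apply_deckT_zpow hT]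
    exact deckT_zpow_apply_mem_band m (mem_thetaZ_iff.1 hz i)

lemma bddAbove_image_band {g : ℝ × ℝ → ℝ} (hg : Continuous g) (hgT : IsDeckInvariant g)
    (a b : ℝ) : BddAbove (g '' BandAB a b) := by
  obtain ⟨M, hM⟩ := (isCompact_band_inter_strip a b).bddAbove_image hg.continuousOn
  refine ⟨M, ?_⟩
  rintro _ ⟨z, hz, rfl⟩
  obtain ⟨m, hm⟩ := exists_deckT_zpow_mem_strip z
  rw [← hgT m z]
  exact hM ⟨_, ⟨deckT_zpow_apply_mem_band m hz, hm⟩, rfl⟩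

lemma exists_abs_le_band {g : ℝ × ℝ → ℝ} (hg : Continuous g) (hgT : IsDeckInvariant g)
    (a b : ℝ) : ∃ M, 0 ≤ M ∧ ∀ u ∈ BandAB a b, |g u| ≤ M := by
  obtain ⟨M, hM⟩ := bddAbove_image_band hg.abs (fun m z => by simp only [hgT m z]) a b
  exact ⟨max M 0, le_max_right _ _, fun u hu => (hM ⟨u, hu, rfl⟩).trans (le_max_left _ _)⟩

lemma exists_isMaxOn_thetaZ (hc : Continuous f) (hc' : Continuous f.symm) (hT : Commute f deckT)
    {a b : ℝ} (hne : (ThetaZ f (BandAB a b)).Nonempty) {g : ℝ × ℝ → ℝ} (hg : Continuous g)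
    (hgT : IsDeckInvariant g) :
    ∃ w ∈ ThetaZ f (BandAB a b), IsMaxOn g (ThetaZ f (BandAB a b)) w := by
  have hK : IsCompact (ThetaZ f (BandAB a b) ∩ Prod.fst ⁻¹' Icc (0 : ℝ) 1) :=
    (isCompact_band_inter_strip a b).of_isClosed_subset
      ((isClosed_thetaZ hc hc' (isClosed_band a b)).inter (isClosed_Icc.preimage continuous_fst))
      (inter_subset_inter_left _ (thetaZ_subset _))
  have translate : ∀ z ∈ ThetaZ f (BandAB a b),
      ∃ m : ℤ, (deckT ^ m) z ∈ ThetaZ f (BandAB a b) ∩ Prod.fst ⁻¹' Icc (0 : ℝ) 1 := by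
    intro z hz
    obtain ⟨m, hm⟩ := exists_deckT_zpow_mem_strip z
    exact ⟨m, deckT_zpow_apply_mem_thetaZ hT m hz, hm⟩
  obtain ⟨z₀, hz₀⟩ := hne
  obtain ⟨m₀, hm₀⟩ := translate z₀ hz₀
  obtain ⟨w, hw, hmax⟩ := hK.exists_isMaxOn ⟨_, hm₀⟩ hg.continuousOn
  refine ⟨w, hw.1, fun z hz => ?_⟩
  obtain ⟨m, hm⟩ := translate z hz
  show g z ≤ g w
  rw [← hgT m z]
  exact hmax hm

def TrapsBelow (f : ℝ × ℝ → ℝ × ℝ) (c : ℝ) : Prop :=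
  ∀ p : ℝ × ℝ, p.2 ≤ c → (f p).2 < c

lemma trapsBelow_or_symm_lt (hc' : Continuous f.symm) {c : ℝ}
    (hline : ∀ p : ℝ × ℝ, p.2 = c → (f p).2 < c) :
    TrapsBelow f c ∨ ∀ q : ℝ × ℝ, c ≤ q.2 → (f.symm q).2 < c := by
  refine or_iff_not_imp_left.2 fun h q hq => ?_
  simp only [TrapsBelow, not_forall, not_lt] at h
  obtain ⟨p, hp, hfp⟩ := h
  by_contra! hfq
  have hconn : IsPreconnected {w : ℝ × ℝ | c ≤ w.2} :=
    (convex_halfSpace_ge (LinearMap.snd ℝ ℝ ℝ).isLinear c).isPreconnected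
  obtain ⟨w, hw, hwc⟩ := hconn.intermediate_value hfp hq (continuous_snd.comp hc').continuousOn
    ⟨by simpa using hp, hfq⟩
  have := hline _ hwc
  rw [Equiv.apply_symm_apply] at this
  exact (lt_irrefl _) (this.trans_le hw)

lemma trapsBelow_of_le_of_le (hc' : Continuous f.symm) {c : ℝ}
    (hline : ∀ p : ℝ × ℝ, p.2 = c → (f p).2 < c) {z : ℝ × ℝ} (hz : c ≤ z.2)
    (hfz : c ≤ (f z).2) : TrapsBelow f c :=
  (trapsBelow_or_symm_lt hc' hline).resolve_right fun h => by
    simpa using (h (f z) hfz).trans_le hz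

lemma TrapsBelow.of_line (hc : Continuous f) (hc' : Continuous f.symm) (hT : Commute f deckT)
    {a b : ℝ} (hline : ∀ p : ℝ × ℝ, p.2 = a → (f p).2 < a) (hb : TrapsBelow f b) :
    TrapsBelow f a := by
  refine (trapsBelow_or_symm_lt hc' hline).resolve_right fun h => ?_
  -- `f⁻¹` would map the whole half-plane above `max a b` into the band, where `y ∘ f` is bounded
  obtain ⟨M, hM⟩ := bddAbove_image_band (g := fun z => (f z).2) (continuous_snd.comp hc)
    (fun m z => by dsimp only; rw [apply_deckT_zpow hT, deckT_zpow_apply]) a b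
  set q : ℝ × ℝ := (0, max M (max a b) + 1)
  have hqM : M < q.2 := by simp only [q]; linarith [le_max_left M (max a b)]
  have hqb : b < q.2 := by
    simp only [q]; linarith [le_max_right a b, le_max_right M (max a b)]
  have hqa : a ≤ q.2 := by
    simp only [q]; linarith [le_max_left a b, le_max_right M (max a b)]
  have hband : f.symm q ∈ BandAB a b := by
    refine ⟨le_of_not_gt fun hlt => ?_, (h q hqa).le⟩
    simpa using (hb _ hlt.le).trans hqb
  exact (hM ⟨_, hband, rfl⟩).not_gt (by simpa using hqM)

lemma pow_apply_mem_band_of_le {a b : ℝ} (ha : TrapsBelow f a) (hb : TrapsBelow f b)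
    {z : ℝ × ℝ} {n : ℕ} (hz : z ∈ BandAB a b) (hfz : (f ^ n) z ∈ BandAB a b) {j : ℕ}
    (hj : j ≤ n) : (f ^ j) z ∈ BandAB a b := by
  have hup : MapsTo f {p : ℝ × ℝ | p.2 ≤ a} {p | p.2 ≤ a} := fun p hp => (ha p hp).le
  have hlow : MapsTo f {p : ℝ × ℝ | p.2 < b} {p | p.2 < b} := fun p hp => hb p hp.le
  refine ⟨le_of_not_gt fun hlt => ?_, hup.iterate j hz.2⟩
  have := hlow.iterate (n - j) hlt
  rw [Equiv.Perm.coe_pow, ← Function.iterate_add_apply, Nat.sub_add_cancel hj] at this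
  exact this.not_ge hfz.1

lemma exists_lt_of_forall_zpow_apply_mem_band (hc : Continuous f) (hc' : Continuous f.symm)
    (hT : Commute f deckT) {a b : ℝ} {g : ℝ × ℝ → ℝ} (hg : Continuous g)
    (hgT : IsDeckInvariant g) {c : ℝ} (hgc : ∀ θ ∈ ThetaZ f (BandAB a b), g θ < c) :
    ∃ N : ℕ, ∀ u : ℝ × ℝ, (∀ i : ℤ, |i| ≤ N → (f ^ i) u ∈ BandAB a b) → g u < c := by
  set V : ℕ → Set (ℝ × ℝ) := fun N =>
    Prod.fst ⁻¹' Icc 0 1 ∩ ⋂ (i : ℤ) (_ : |i| ≤ N), (f ^ i) ⁻¹' BandAB a b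
  have hV_closed : ∀ N, IsClosed (V N) := fun N =>
    (isClosed_Icc.preimage continuous_fst).inter
      (isClosed_biInter fun i _ => (isClosed_band a b).preimage (continuous_zpow hc hc' i))
  have hV_cpct : ∀ N, IsCompact (V N) := fun N =>
    (isCompact_band_inter_strip a b).of_isClosed_subset (hV_closed N)
      fun u hu => ⟨by simpa using mem_iInter₂.1 hu.2 0 (by simp), hu.1⟩
  have hV_dir : Directed (· ⊇ ·) V := Antitone.directed_ge fun N N' h u hu =>
    ⟨hu.1, mem_iInter₂.2 fun i hi => mem_iInter₂.1 hu.2 i (hi.trans (by exact_mod_cast h))⟩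
  -- `⋂ N, V N` is the part of `Θ` in the strip, where `g < c`; by compactness some `V N` is too
  obtain ⟨N, hN⟩ := exists_subset_nhds_of_isCompact' hV_dir hV_cpct hV_closed
    (U := {u | g u < c}) fun x hx => (isOpen_lt hg continuous_const).mem_nhds <|
      hgc x <| mem_thetaZ_iff.2 fun i =>
        mem_iInter₂.1 (mem_iInter.1 hx i.natAbs).2 i (Int.abs_eq_natAbs i).le
  refine ⟨N, fun u hu => ?_⟩
  obtain ⟨m, hm⟩ := exists_deckT_zpow_mem_strip u
  rw [← hgT m u]
  refine hN ⟨hm, mem_iInter₂.2 fun i hi => ?_⟩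
  rw [mem_preimage, zpow_apply_deckT_zpow hT]
  exact deckT_zpow_apply_mem_band m (hu i hi)

lemma sub_le_of_step_le {S : ℕ → ℝ} {n : ℕ} {M : ℝ} (hstep : ∀ k < n, S (k + 1) - S k ≤ M)
    {i k : ℕ} (hik : i ≤ k) (hkn : k ≤ n) : S k - S i ≤ (k - i : ℕ) * M := by
  induction k, hik using Nat.le_induction with
  | base => simp
  | succ k hik ih =>
    have := hstep k hkn
    rw [Nat.succ_sub hik, Nat.cast_succ]
    linarith [ih (by omega)]

lemma sub_le_of_block_le {S : ℕ → ℝ} {n N r : ℕ} {M b : ℝ} (hr : 0 < r) (hM : 0 ≤ M)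
    (hstep : ∀ k < n, S (k + 1) - S k ≤ M)
    (hblock : ∀ j, N ≤ j → j + N ≤ n → S (j + r) - S j ≤ r * b) :
    S n - S 0 ≤ n * b + (2 * N + r) * (M + |b|) := by
  have hb := neg_abs_le b
  rcases lt_or_ge n (2 * N) with hn | hn
  · have h := sub_le_of_step_le hstep (Nat.zero_le n) le_rfl
    have hn' : (n : ℝ) ≤ 2 * N := by exact_mod_cast hn.le
    simp only [Nat.sub_zero] at h
    nlinarith [abs_nonneg b]
  obtain ⟨k, rfl⟩ := Nat.exists_eq_add_of_le hn
  -- cut `[N, N + k]` into blocks of length `r` and a remainder shorter than `r`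
  have middle : ∀ l ≤ k, S (N + l) - S N ≤ l * b + r * (M + |b|) := by
    intro l
    induction l using Nat.strong_induction_on with
    | _ l ih =>
      intro hl
      rcases lt_or_ge l r with hlr | hlr
      · have h := sub_le_of_step_le hstep (Nat.le_add_right N l) (by omega)
        have hlr' : (l : ℝ) ≤ r := by exact_mod_cast hlr.le
        rw [Nat.add_sub_cancel_left] at h
        nlinarith [abs_nonneg b]
      · obtain ⟨l', rfl⟩ := Nat.exists_eq_add_of_le hlr
        have h₁ := ih l' (by omega) (by omega)
        have h₂ := hblock (N + l') (by omega) (by omega)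
        rw [add_assoc, add_comm l' r] at h₂
        push_cast
        linarith
  have h₁ := sub_le_of_step_le hstep (Nat.zero_le N) (by omega)
  have h₂ := sub_le_of_step_le hstep (Nat.le_add_right (N + k) N) (by omega)
  have h₃ := middle k le_rfl
  simp only [Nat.sub_zero, Nat.add_sub_cancel_left] at h₁ h₂
  rw [show 2 * N + k = N + k + N by ring]
  push_cast
  nlinarith [abs_nonneg b]

def IsAddCocycle (f : Equiv.Perm (ℝ × ℝ)) (φ : ℕ → ℝ × ℝ → ℝ) : Prop :=
  ∀ (m n : ℕ) (z : ℝ × ℝ), φ (m + n) z = φ n z + φ m ((f ^ n) z)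

def displacement (f : Equiv.Perm (ℝ × ℝ)) (n : ℕ) (z : ℝ × ℝ) : ℝ :=
  ((f ^ n) z).1 - z.1

lemma isAddCocycle_displacement : IsAddCocycle f (displacement f) := fun m n z => by
  simp only [displacement, pow_add, Equiv.Perm.mul_apply]
  ring

lemma continuous_displacement (hc : Continuous f) (n : ℕ) : Continuous (displacement f n) :=
  (continuous_fst.comp (hc.iterate n)).sub continuous_fst

lemma isDeckInvariant_displacement (hT : Commute f deckT) (n : ℕ) :
    IsDeckInvariant (displacement f n) := fun m z => by
  have := zpow_apply_deckT_zpow hT n m z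
  rw [zpow_natCast] at this
  simp only [displacement]
  rw [this, deckT_zpow_apply, deckT_zpow_apply]
  ring

namespace IsAddCocycle

variable {φ : ℕ → ℝ × ℝ → ℝ}

lemma neg (hφ : IsAddCocycle f φ) : IsAddCocycle f fun n z => -φ n z := fun m n z => by
  show -φ (m + n) z = -φ n z + -φ m ((f ^ n) z)
  rw [hφ m n z]
  ring

lemma apply_zero (hφ : IsAddCocycle f φ) (z : ℝ × ℝ) : φ 0 z = 0 := by
  have := hφ 0 0 z
  simp only [add_zero, pow_zero, Equiv.Perm.one_apply] at this
  linarith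

lemma apply_succ_sub (hφ : IsAddCocycle f φ) (k : ℕ) (z : ℝ × ℝ) :
    φ (k + 1) z - φ k z = φ 1 ((f ^ k) z) := by
  rw [add_comm, hφ]
  ring

lemma apply_add_sub (hφ : IsAddCocycle f φ) (j r : ℕ) (z : ℝ × ℝ) :
    φ (j + r) z - φ j z = φ r ((f ^ j) z) := by
  rw [add_comm, hφ]
  ring

lemma exists_tendsto_forall_lt (hc : Continuous f) (hc' : Continuous f.symm)
    (hT : Commute f deckT) (hφ : IsAddCocycle f φ) (hφc : ∀ n, Continuous (φ n))
    (hφT : ∀ n, IsDeckInvariant (φ n)) {a b : ℝ} (hne : (ThetaZ f (BandAB a b)).Nonempty) :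
    ∃ γ : ℝ, (∃ w : ℕ → ℝ × ℝ, (∀ n, w n ∈ ThetaZ f (BandAB a b)) ∧
        Tendsto (fun n => φ n (w n) / n) atTop (𝓝 γ)) ∧
      ∀ ε > 0, ∃ r : ℕ, 0 < r ∧ ∀ θ ∈ ThetaZ f (BandAB a b), φ r θ < r * (γ + ε) := by
  choose W hW hWmax using fun n => exists_isMaxOn_thetaZ hc hc' hT hne (hφc n) (hφT n)
  have hsub : Subadditive fun n => φ n (W n) := fun m n => by
    have h₁ : φ n (W (m + n)) ≤ φ n (W n) := hWmax n (hW (m + n))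
    have h₂ : φ m ((f ^ n) (W (m + n))) ≤ φ m (W m) :=
      hWmax m (pow_apply_mem_thetaZ (hW (m + n)) n)
    show φ (m + n) (W (m + n)) ≤ φ m (W m) + φ n (W n)
    rw [hφ m n]
    linarith
  obtain ⟨M, hM0, hM⟩ := exists_abs_le_band (hφc 1) (hφT 1) a b
  have hbdd : BddBelow (range fun n => φ n (W n) / n) := by
    refine ⟨-M, ?_⟩
    rintro _ ⟨n, rfl⟩
    rcases n.eq_zero_or_pos with rfl | hn
    · simpa using hM0
    have h := sub_le_of_step_le (S := fun k => -φ k (W n)) (n := n) (M := M)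
      (fun k _ => by
        have := neg_abs_le (φ 1 ((f ^ k) (W n)))
        have := hM _ (thetaZ_subset _ (pow_apply_mem_thetaZ (hW n) k))
        have := hφ.apply_succ_sub k (W n)
        show -φ (k + 1) (W n) - -φ k (W n) ≤ M
        linarith) (Nat.zero_le n) le_rfl
    simp only [hφ.apply_zero, Nat.sub_zero] at h
    rw [le_div_iff₀ (by exact_mod_cast hn)]
    linarith
  refine ⟨hsub.lim, ⟨W, hW, hsub.tendsto_lim hbdd⟩, fun ε hε => ?_⟩
  obtain ⟨r, hr, hr0⟩ := (((hsub.tendsto_lim hbdd).eventually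
    (Iio_mem_nhds (lt_add_of_pos_right _ hε))).and (eventually_gt_atTop 0)).exists
  refine ⟨r, hr0, fun θ hθ => ?_⟩
  rw [div_lt_iff₀ (by exact_mod_cast hr0)] at hr
  have : φ r θ ≤ φ r (W r) := hWmax r hθ
  linarith

lemma eventually_div_le (hc : Continuous f) (hc' : Continuous f.symm) (hT : Commute f deckT)
    (hφ : IsAddCocycle f φ)
    (hφc : ∀ n, Continuous (φ n)) (hφT : ∀ n, IsDeckInvariant (φ n)) {a b : ℝ}
    (ha : TrapsBelow f a) (hb : TrapsBelow f b) {γ : ℝ}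
    (hγ : ∀ ε > 0, ∃ r : ℕ, 0 < r ∧ ∀ θ ∈ ThetaZ f (BandAB a b), φ r θ < r * (γ + ε)) :
    ∀ ε > 0, ∀ᶠ n : ℕ in atTop,
      ∀ z ∈ BandAB a b, (f ^ n) z ∈ BandAB a b → φ n z / n ≤ γ + ε := by
  intro ε hε
  obtain ⟨r, hr, hθ⟩ := hγ (ε / 2) (half_pos hε)
  obtain ⟨N, hN⟩ := exists_lt_of_forall_zpow_apply_mem_band hc hc' hT (hφc r) (hφT r) hθ
  obtain ⟨M, hM0, hM⟩ := exists_abs_le_band (hφc 1) (hφT 1) a b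
  set C := (2 * N + r : ℝ) * (M + |γ + ε / 2|)
  have hC : ∀ᶠ n : ℕ in atTop, C / n < ε / 2 :=
    (tendsto_const_div_atTop_nhds_zero_nat C).eventually (Iio_mem_nhds (half_pos hε))
  filter_upwards [hC, eventually_gt_atTop 0] with n hCn hn z hz hfz
  have hseg : ∀ j ≤ n, (f ^ j) z ∈ BandAB a b := fun j hj =>
    pow_apply_mem_band_of_le ha hb hz hfz hj
  -- along the orbit segment, far from both ends every block of length `r` is close to `Θ`
  have hsum := sub_le_of_block_le (S := fun k => φ k z) (n := n) (N := N) hr hM0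
    (fun k hk => by
      rw [hφ.apply_succ_sub]
      exact (le_abs_self _).trans (hM _ (hseg k hk.le)))
    (fun j hNj hjn => by
      rw [hφ.apply_add_sub]
      refine (hN _ fun i hi => ?_).le
      have hi' := abs_le.1 hi
      rw [zpow_apply_pow_apply (by omega)]
      exact hseg _ (by omega))
  have hn' : (0 : ℝ) < n := by exact_mod_cast hn
  rw [div_lt_iff₀ hn'] at hCn
  rw [div_le_iff₀ hn']
  simp only [hφ.apply_zero, sub_zero] at hsum
  linarith

end IsAddCocycle

lemma coe_mem_rhoB_of_tendsto {K : Set (ℝ × ℝ)} {w : ℕ → ℝ × ℝ} (hw : ∀ n, w n ∈ K)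
    (hfw : ∀ n, (f ^ n) (w n) ∈ K) {L : ℝ}
    (h : Tendsto (fun n => displacement f n (w n) / n) atTop (𝓝 L)) :
    (L : EReal) ∈ rhoB f K := by
  simp only [rhoB, mem_iInter]
  intro m _
  refine mem_closure_of_tendsto ((continuous_coe_real_ereal.tendsto L).comp h) ?_
  filter_upwards [eventually_ge_atTop m] with n hn
  exact mem_iUnion₂.2 ⟨n, hn, w n, hw n, hfw n, rfl⟩

lemma rhoB_subset_Icc {K : Set (ℝ × ℝ)} {α β : ℝ}
    (hlo : ∀ ε > 0, ∀ᶠ n : ℕ in atTop, ∀ z ∈ K, (f ^ n) z ∈ K → α - ε ≤ displacement f n z / n)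
    (hup : ∀ ε > 0, ∀ᶠ n : ℕ in atTop, ∀ z ∈ K, (f ^ n) z ∈ K → displacement f n z / n ≤ β + ε) :
    rhoB f K ⊆ Icc (α : EReal) β := by
  intro v hv
  have hε : ∀ ε > 0, v ∈ Icc ((α - ε : ℝ) : EReal) ((β + ε : ℝ) : EReal) := by
    intro ε hε
    obtain ⟨m, hm⟩ := ((hlo ε hε).and (hup ε hε)).exists_forall_of_atTop
    refine closure_minimal ?_ isClosed_Icc (mem_iInter₂.1 hv (max m 1) (le_max_right _ _))
    intro x hx
    obtain ⟨n, hn, z, hz, hfz, rfl⟩ := mem_iUnion₂.1 hx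
    have hmn := hm n (le_of_max_le_left hn)
    exact ⟨EReal.coe_le_coe_iff.2 (hmn.1 z hz hfz), EReal.coe_le_coe_iff.2 (hmn.2 z hz hfz)⟩
  refine ⟨EReal.ge_of_forall_gt_iff_ge.1 fun x hx => ?_,
    EReal.le_of_forall_lt_iff_le.1 fun x hx => ?_⟩
  · have := (hε (α - x) (by simpa using hx)).1
    rwa [sub_sub_cancel] at this
  · have := (hε (x - β) (by simpa using hx)).2
    rwa [add_sub_cancel] at this

theorem exists_rhoB_band_subset_Icc (hc : Continuous f) (hc' : Continuous f.symm)
    (hT : Commute f deckT) {a b : ℝ} (ha : TrapsBelow f a) (hb : TrapsBelow f b)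
    (hne : (ThetaZ f (BandAB a b)).Nonempty) :
    ∃ α β : ℝ, (α : EReal) ∈ rhoB f (ThetaZ f (BandAB a b)) ∧
      (β : EReal) ∈ rhoB f (ThetaZ f (BandAB a b)) ∧ rhoB f (BandAB a b) ⊆ Icc (α : EReal) β := by
  have hψ := isAddCocycle_displacement (f := f)
  have hψc := continuous_displacement hc
  have hψT := isDeckInvariant_displacement hT
  obtain ⟨β, ⟨w, hw, hw_lim⟩, hβ⟩ := hψ.exists_tendsto_forall_lt hc hc' hT hψc hψT hne
  have hψc' n : Continuous fun z => -displacement f n z := (hψc n).neg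
  have hψT' n : IsDeckInvariant fun z => -displacement f n z := fun m z => by
    simp only [hψT n m z]
  obtain ⟨γ, ⟨w', hw', hw'_lim⟩, hγ⟩ := hψ.neg.exists_tendsto_forall_lt hc hc' hT hψc' hψT' hne
  have hγ_le := hψ.neg.eventually_div_le hc hc' hT hψc' hψT' ha hb hγ
  refine ⟨-γ, β, coe_mem_rhoB_of_tendsto hw' (fun n => pow_apply_mem_thetaZ (hw' n) n) ?_,
    coe_mem_rhoB_of_tendsto hw (fun n => pow_apply_mem_thetaZ (hw n) n) hw_lim,
    rhoB_subset_Icc (fun ε hε => ?_) (hψ.eventually_div_le hc hc' hT hψc hψT ha hb hβ)⟩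
  · simpa only [neg_div, neg_neg] using hw'_lim.neg
  · filter_upwards [hγ_le ε hε] with n hn z hz hfz
    have := hn z hz hfz
    rw [neg_div] at this
    linarith

lemma Icc_subset_erealHull {S : Set EReal} {a b : EReal} (ha : a ∈ S) (hb : b ∈ S) :
    Icc a b ⊆ erealHull S := fun _ hv =>
  mem_iUnion₂.2 ⟨a, ha, mem_iUnion₂.2 ⟨b, hb, hv⟩⟩

end AnnulusLift

open AnnulusLift

theorem rotation_set_of_band_in_hull_general
    (ftil : Equiv.Perm (ℝ × ℝ)) (hftc : Continuous ftil) (hftc' : Continuous ftil.symm)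
    (hcomm : ∀ z : ℝ × ℝ, ftil (deckT z) = deckT (ftil z))
    (c0 c1 c2 : ℝ)
    (hH1 : ∀ c ∈ ({c0, c1, c2} : Set ℝ), ∀ p : ℝ × ℝ, p.2 = c → (ftil p).2 < c)
    (hTh0 : (ThetaZ ftil (BandAB c0 c1)).Nonempty)
    (hTh1 : (ThetaZ ftil (BandAB c1 c2)).Nonempty)
    (hr0 : rhoB ftil (ThetaZ ftil (BandAB c0 c1)) ⊆ Ioo (0 : EReal) ⊤)
    (hr1 : rhoB ftil (ThetaZ ftil (BandAB c1 c2)) ⊆ Ioo ⊥ (0 : EReal)) :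
    rhoB ftil (BandAB c0 c1) ⊆ erealHull (rhoB ftil (ThetaZ ftil (BandAB c0 c1))) ∧
    rhoB ftil (BandAB c1 c2) ⊆ erealHull (rhoB ftil (ThetaZ ftil (BandAB c1 c2))) ∧
    rhoB ftil (BandAB c0 c1) ⊆ Ioo (0 : EReal) ⊤ ∧
    rhoB ftil (BandAB c1 c2) ⊆ Ioo ⊥ (0 : EReal) := by
  have hT : Commute ftil deckT := Equiv.ext hcomm
  obtain ⟨z₀, hz₀⟩ := hTh0
  obtain ⟨z₁, hz₁⟩ := hTh1
  have hfz₀ := thetaZ_subset _ (pow_apply_mem_thetaZ hz₀ 1)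
  have hfz₁ := thetaZ_subset _ (pow_apply_mem_thetaZ hz₁ 1)
  rw [pow_one] at hfz₀ hfz₁
  have h₁ : TrapsBelow ftil c1 :=
    trapsBelow_of_le_of_le hftc' (hH1 c1 (by simp)) (thetaZ_subset _ hz₀).1 hfz₀.1
  have h₂ : TrapsBelow ftil c2 :=
    trapsBelow_of_le_of_le hftc' (hH1 c2 (by simp)) (thetaZ_subset _ hz₁).1 hfz₁.1
  have h₀ : TrapsBelow ftil c0 := h₁.of_line hftc hftc' hT (hH1 c0 (by simp))
  obtain ⟨α₀, β₀, hα₀, hβ₀, hsub₀⟩ := exists_rhoB_band_subset_Icc hftc hftc' hT h₀ h₁ ⟨z₀, hz₀⟩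
  obtain ⟨α₁, β₁, hα₁, hβ₁, hsub₁⟩ := exists_rhoB_band_subset_Icc hftc hftc' hT h₁ h₂ ⟨z₁, hz₁⟩
  refine ⟨hsub₀.trans (Icc_subset_erealHull hα₀ hβ₀), hsub₁.trans (Icc_subset_erealHull hα₁ hβ₁),
    fun v hv => ⟨(hr0 hα₀).1.trans_le (hsub₀ hv).1, (hsub₀ hv).2.trans_lt (EReal.coe_lt_top β₀)⟩,
    fun v hv => ⟨(EReal.bot_lt_coe α₁).trans_le (hsub₁ hv).1, (hsub₁ hv).2.trans_lt (hr1 hβ₁).2⟩⟩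

/-- **Proposition 6.7.** Under (H₁)–(H₃), `ρ_{Ã_i}(f̃) ⊆ Conv(ρ_{Θ(Ã_i)}(f̃))` for
`i ∈ {0,1}`; in particular `ρ_{Ã₀}(f̃) ⊆ (0,+∞)` and `ρ_{Ã₁}(f̃) ⊆ (−∞,0)`. -/
theorem rotation_set_of_band_in_hull
    (ftil : Equiv.Perm (ℝ × ℝ)) (hftc : Continuous ftil) (hftc' : Continuous ftil.symm)
    (hfI : IsotopicToIdP ftil)
    (hcomm : ∀ z : ℝ × ℝ, ftil (deckT z) = deckT (ftil z))
    (c0 c1 c2 : ℝ) (h01 : c1 < c0) (h12 : c2 < c1)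
    (hH1 : ∀ c ∈ ({c0, c1, c2} : Set ℝ), ∀ p : ℝ × ℝ, p.2 = c → (ftil p).2 < c)
    (hH2 : ∀ n : ℕ, 1 ≤ n → ∃ p : ℝ × ℝ, p.2 = c0 ∧ ((ftil ^ n) p).2 = c2)
    (hTh0 : (ThetaZ ftil (BandAB c0 c1)).Nonempty)
    (hTh1 : (ThetaZ ftil (BandAB c1 c2)).Nonempty)
    (hr0 : rhoB ftil (ThetaZ ftil (BandAB c0 c1)) ⊆ Ioo (0 : EReal) ⊤)
    (hr1 : rhoB ftil (ThetaZ ftil (BandAB c1 c2)) ⊆ Ioo ⊥ (0 : EReal)) :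
    rhoB ftil (BandAB c0 c1) ⊆ erealHull (rhoB ftil (ThetaZ ftil (BandAB c0 c1))) ∧
    rhoB ftil (BandAB c1 c2) ⊆ erealHull (rhoB ftil (ThetaZ ftil (BandAB c1 c2))) ∧
    rhoB ftil (BandAB c0 c1) ⊆ Ioo (0 : EReal) ⊤ ∧
    rhoB ftil (BandAB c1 c2) ⊆ Ioo ⊥ (0 : EReal) :=
  rotation_set_of_band_in_hull_general ftil hftc hftc' hcomm c0 c1 c2 hH1 hTh0 hTh1 hr0 hr1
end
end

section
/- Assume hypotheses (H₁), (H₂), (H₃) hold for f̃ and the horizontal lines Γ₀, Γ₁, Γ₂. Then for every real number M > 0 there exists n₀ ∈ ℕ such that for every compact set K̃ ⊆ Ã₀ with diam(p₁(K̃)) ≤ M and for every integer n with |n| ≥ n₀, one has f̃ⁿ(K̃) ∩ K̃ = ∅. -/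
open Set Function Topology

noncomputable section

/-!
Because `f̃` commutes with `T` and pushes `Γ₀` and `Γ₁` downwards, it maps each closed lower
half-plane `{y ≤ c_i}` into itself: the connected half-planes above and below the bounded strip
containing `f̃(Γ_c)` must lie on opposite sides of `f̃(Γ_c)` (a half-plane cannot be mapped into a
strip), and a point of `Θ(Ã₀)` fixes which side is which. Hence an orbit segment that starts and
ends in `Ã₀` stays in `Ã₀`. Positivity of the rotation set gives `m` such that on `Θ(Ã₀)` the
horizontal displacement after `m` steps is at least `1`; by compactness modulo `T` it is at least
`1/2` at every point whose orbit stays `N` steps in `Ã₀` in both directions. Cutting a long orbit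
segment in `Ã₀` into blocks of length `m`, its displacement grows linearly, so it eventually exceeds
the horizontal width `M` of `K̃`.
-/

open Filter

lemma deckT_zpow_apply (k : ℤ) : ∀ z : ℝ × ℝ, (deckT ^ k) z = (z.1 + k, z.2) := by
  induction k using Int.induction_on with
  | zero => simp
  | succ k ih =>
    intro z
    rw [zpow_add_one, Equiv.Perm.mul_apply, ih]
    simp only [deckT, Equiv.coe_fn_mk]
    push_cast; ring_nf
  | pred k ih =>
    intro z
    rw [zpow_sub_one, Equiv.Perm.mul_apply, ih]
    simp only [deckT, Equiv.Perm.inv_def, Equiv.coe_fn_symm_mk]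
    push_cast; ring_nf

lemma commute_deckT {f : Equiv.Perm (ℝ × ℝ)} (hcomm : ∀ z, f (deckT z) = deckT (f z)) :
    Commute f deckT :=
  Equiv.ext hcomm

lemma apply_fst_add_int {g : Equiv.Perm (ℝ × ℝ)} (hg : Commute g deckT) (k : ℤ) (z : ℝ × ℝ) :
    g (z.1 + k, z.2) = ((g z).1 + k, (g z).2) := by
  rw [← deckT_zpow_apply, ← deckT_zpow_apply, ← Equiv.Perm.mul_apply, (hg.zpow_right k).eq,
    Equiv.Perm.mul_apply]

lemma exists_int_add_mem_Icc {a b : ℝ} {z : ℝ × ℝ} (hz : z ∈ BandAB a b) :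
    ∃ k : ℤ, (z.1 + k, z.2) ∈ Icc ((0 : ℝ), b) (1, a) := by
  have hfract : z.1 + ((-⌊z.1⌋ : ℤ) : ℝ) = Int.fract z.1 := by
    push_cast; unfold Int.fract; ring
  refine ⟨-⌊z.1⌋, ⟨⟨?_, hz.1⟩, ⟨?_, hz.2⟩⟩⟩
  · rw [hfract]; exact Int.fract_nonneg _
  · rw [hfract]; exact (Int.fract_lt_one _).le

lemma exists_abs_le_on_band {φ : ℝ × ℝ → ℝ} (hφ : Continuous φ)
    (hper : ∀ (k : ℤ) (z : ℝ × ℝ), φ (z.1 + k, z.2) = φ z) (a b : ℝ) :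
    ∃ C, 0 ≤ C ∧ ∀ z ∈ BandAB a b, |φ z| ≤ C := by
  obtain ⟨C, hC⟩ := (isCompact_Icc (a := ((0 : ℝ), b)) (b := (1, a))).exists_bound_of_continuousOn
    hφ.continuousOn
  refine ⟨max C 0, le_max_right _ _, fun z hz => ?_⟩
  obtain ⟨k, hk⟩ := exists_int_add_mem_Icc hz
  rw [← hper k z, ← Real.norm_eq_abs]
  exact (hC _ hk).trans (le_max_left _ _)

section HalfPlanes

variable {g : Equiv.Perm (ℝ × ℝ)}

lemma exists_abs_snd_le_of_apply_mem_band (hg' : Continuous g.symm) (hcomm : Commute g deckT)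
    (a b : ℝ) : ∃ R, ∀ p, g p ∈ BandAB a b → |p.2| ≤ R := by
  obtain ⟨R, hR⟩ := (isCompact_Icc (a := ((0 : ℝ), b)) (b := (1, a))).exists_bound_of_continuousOn
    (continuous_snd.comp hg').continuousOn
  refine ⟨R, fun p hp => ?_⟩
  obtain ⟨k, hk⟩ := exists_int_add_mem_Icc hp
  have hsymm := apply_fst_add_int hcomm.inv_left k (g p)
  rw [Equiv.Perm.inv_def, Equiv.symm_apply_apply] at hsymm
  simpa [hsymm] using hR _ hk

lemma not_mapsTo_lowerHalfPlane_band (hg' : Continuous g.symm) (hcomm : Commute g deckT)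
    (a b c : ℝ) : ¬ MapsTo g {p | p.2 < c} (BandAB a b) := by
  intro h
  obtain ⟨R, hR⟩ := exists_abs_snd_le_of_apply_mem_band hg' hcomm a b
  have hp : ((0 : ℝ), min c (-|R|) - 1).2 < c := by simp only; linarith [min_le_left c (-|R|)]
  have := (abs_le.1 (hR _ (h hp))).1
  dsimp only at this
  linarith [min_le_right c (-|R|), le_abs_self R]

lemma not_mapsTo_upperHalfPlane_band (hg' : Continuous g.symm) (hcomm : Commute g deckT)
    (a b c : ℝ) : ¬ MapsTo g {p | c < p.2} (BandAB a b) := by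
  intro h
  obtain ⟨R, hR⟩ := exists_abs_snd_le_of_apply_mem_band hg' hcomm a b
  have hp : c < ((0 : ℝ), max c |R| + 1).2 := by simp only; linarith [le_max_left c |R|]
  have := (abs_le.1 (hR _ (h hp))).2
  dsimp only at this
  linarith [le_max_right c |R|, le_abs_self R]

lemma image_halfPlanes_dichotomy (hg' : Continuous g.symm) (hcomm : Commute g deckT)
    {c m M : ℝ} (hline : ∀ x, (g (x, c)).2 ∈ Icc m M) :
    (MapsTo g {p | p.2 < c} {q | q.2 ≤ M} ∧ MapsTo g {p | c < p.2} {q | m ≤ q.2}) ∨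
      (MapsTo g {p | p.2 < c} {q | m ≤ q.2} ∧ MapsTo g {p | c < p.2} {q | q.2 ≤ M}) := by
  set U : Set (ℝ × ℝ) := {q | c < (g.symm q).2}
  set L : Set (ℝ × ℝ) := {q | (g.symm q).2 < c}
  have hU : IsOpen U := isOpen_lt continuous_const (continuous_snd.comp hg')
  have hL : IsOpen L := isOpen_lt (continuous_snd.comp hg') continuous_const
  have hUL : Disjoint U L := disjoint_left.2 fun _ (h1 : c < _) h2 => lt_asymm h1 h2
  have hgU : ∀ p : ℝ × ℝ, c < p.2 → g p ∈ U := fun p hp => by simpa [U] using hp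
  have hgL : ∀ p : ℝ × ℝ, p.2 < c → g p ∈ L := fun p hp => by simpa [L] using hp
  have hcover : ∀ q : ℝ × ℝ, q.2 ∉ Icc m M → q ∈ U ∪ L := by
    intro q hq
    rcases lt_trichotomy (g.symm q).2 c with h | h | h
    · exact Or.inr h
    · exact absurd (by simpa [← h] using hline (g.symm q).1) hq
    · exact Or.inl h
  have hsnd : IsLinearMap ℝ (fun q : ℝ × ℝ => q.2) := ⟨fun _ _ => rfl, fun _ _ => rfl⟩
  have hV := (convex_halfSpace_gt hsnd M).isPreconnected.subset_or_subset hU hL hUL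
    fun q hq => hcover q fun h => (not_lt.2 h.2) hq
  have hW := (convex_halfSpace_lt hsnd m).isPreconnected.subset_or_subset hU hL hUL
    fun q hq => hcover q fun h => (not_lt.2 h.1) hq
  have hVU : {q : ℝ × ℝ | M < q.2} ⊆ U → MapsTo g {p | p.2 < c} {q | q.2 ≤ M} :=
    fun h p hp => not_lt.1 fun (hM : M < (g p).2) => hUL.notMem_of_mem_left (h hM) (hgL p hp)
  have hVL : {q : ℝ × ℝ | M < q.2} ⊆ L → MapsTo g {p | c < p.2} {q | q.2 ≤ M} :=
    fun h p hp => not_lt.1 fun (hM : M < (g p).2) => hUL.notMem_of_mem_right (h hM) (hgU p hp)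
  have hWU : {q : ℝ × ℝ | q.2 < m} ⊆ U → MapsTo g {p | p.2 < c} {q | m ≤ q.2} :=
    fun h p hp => not_lt.1 fun (hm : (g p).2 < m) => hUL.notMem_of_mem_left (h hm) (hgL p hp)
  have hWL : {q : ℝ × ℝ | q.2 < m} ⊆ L → MapsTo g {p | c < p.2} {q | m ≤ q.2} :=
    fun h p hp => not_lt.1 fun (hm : (g p).2 < m) => hUL.notMem_of_mem_right (h hm) (hgU p hp)
  rcases hV with hV | hV <;> rcases hW with hW | hW
  · exact absurd (fun p hp => ⟨hWU hW hp, hVU hV hp⟩)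
      (not_mapsTo_lowerHalfPlane_band hg' hcomm M m c)
  · exact Or.inl ⟨hVU hV, hWL hW⟩
  · exact Or.inr ⟨hWU hW, hVL hV⟩
  · exact absurd (fun p hp => ⟨hWL hW hp, hVL hV hp⟩)
      (not_mapsTo_upperHalfPlane_band hg' hcomm M m c)

lemma exists_image_line_bounds (hg : Continuous g) (hcomm : Commute g deckT) {c : ℝ}
    (hH : ∀ p : ℝ × ℝ, p.2 = c → (g p).2 < c) :
    ∃ m M, M < c ∧ ∀ x, (g (x, c)).2 ∈ Icc m M := by
  set φ : ℝ → ℝ := fun x => (g (x, c)).2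
  have hper : Periodic φ 1 := fun x => by
    simpa using congrArg Prod.snd (apply_fst_add_int hcomm 1 (x, c))
  have hcpt := hper.compact_of_continuous one_ne_zero
    (continuous_snd.comp (hg.comp (continuous_id.prodMk continuous_const)))
  obtain ⟨_, ⟨x₁, rfl⟩, hmax⟩ := hcpt.exists_isGreatest (range_nonempty φ)
  obtain ⟨_, ⟨x₀, rfl⟩, hmin⟩ := hcpt.exists_isLeast (range_nonempty φ)
  exact ⟨φ x₀, φ x₁, hH _ rfl, fun x => ⟨hmin ⟨x, rfl⟩, hmax ⟨x, rfl⟩⟩⟩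

lemma mapsTo_le_of_mapsTo_lt {c M : ℝ} (hM : M < c) (hH : ∀ p : ℝ × ℝ, p.2 = c → (g p).2 < c)
    (hlow : MapsTo g {p | p.2 < c} {q | q.2 ≤ M}) : MapsTo g {p | p.2 ≤ c} {q | q.2 < c} :=
  fun p hp => (lt_or_eq_of_le hp).elim (fun h => (hlow h).trans_lt hM) (hH p)

lemma mapsTo_lowerHalfPlanes (hg : Continuous g) (hg' : Continuous g.symm)
    (hcomm : Commute g deckT) {c₀ c₁ : ℝ} (h01 : c₁ < c₀)
    (hH₀ : ∀ p : ℝ × ℝ, p.2 = c₀ → (g p).2 < c₀) (hH₁ : ∀ p : ℝ × ℝ, p.2 = c₁ → (g p).2 < c₁)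
    {z : ℝ × ℝ} (hz : c₁ < z.2) (hgz : c₁ ≤ (g z).2) :
    MapsTo g {p | p.2 ≤ c₀} {q | q.2 < c₀} ∧ MapsTo g {p | p.2 ≤ c₁} {q | q.2 < c₁} := by
  obtain ⟨m₀, M₀, hM₀, hline₀⟩ := exists_image_line_bounds hg hcomm hH₀
  obtain ⟨m₁, M₁, hM₁, hline₁⟩ := exists_image_line_bounds hg hcomm hH₁
  obtain ⟨low₁, up₁⟩ : MapsTo g {p | p.2 < c₁} {q | q.2 ≤ M₁} ∧
      MapsTo g {p | c₁ < p.2} {q | m₁ ≤ q.2} := by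
    refine (image_halfPlanes_dichotomy hg' hcomm hline₁).resolve_right fun h => ?_
    linarith [show (g z).2 ≤ M₁ from h.2 hz]
  refine ⟨?_, mapsTo_le_of_mapsTo_lt hM₁ hH₁ low₁⟩
  rcases image_halfPlanes_dichotomy hg' hcomm hline₀ with ⟨low₀, -⟩ | ⟨up₀, -⟩
  · exact mapsTo_le_of_mapsTo_lt hM₀ hH₀ low₀
  -- otherwise no point of the plane would be mapped below `min m₀ m₁`
  exfalso
  set q : ℝ × ℝ := (0, min m₀ m₁ - 1)
  rcases lt_or_ge (g.symm q).2 c₀ with h | h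
  · have := up₀ h
    simp only [mem_ofPred_eq, Equiv.apply_symm_apply, q] at this
    linarith [min_le_left m₀ m₁]
  · have := up₁ (h01.trans_le h)
    simp only [mem_ofPred_eq, Equiv.apply_symm_apply, q] at this
    linarith [min_le_right m₀ m₁]

end HalfPlanes

lemma iterate_mem_inter_of_mapsTo {α : Type*} {f : α → α} {S T : Set α} (hS : MapsTo f S S)
    (hT : MapsTo f Tᶜ Tᶜ) {z : α} (hz : z ∈ S) {n j : ℕ} (hn : f^[n] z ∈ T) (hj : j ≤ n) :
    f^[j] z ∈ S ∩ T := by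
  refine ⟨hS.iterate j hz, of_not_not fun hjT => hT.iterate (n - j) hjT ?_⟩
  rwa [← iterate_add_apply, Nat.sub_add_cancel hj]

lemma mem_ThetaZ_iff {f : Equiv.Perm (ℝ × ℝ)} {E : Set (ℝ × ℝ)} {z : ℝ × ℝ} :
    z ∈ ThetaZ f E ↔ ∀ n : ℤ, (f ^ n) z ∈ E := by
  simp only [ThetaZ, mem_iInter]
  refine ⟨fun h n => ?_, fun h n => ⟨(f ^ (-n)) z, h (-n), ?_⟩⟩
  · obtain ⟨w, hw, rfl⟩ := h (-n)
    rwa [← Equiv.Perm.mul_apply, ← zpow_add, add_neg_cancel, zpow_zero, Equiv.Perm.one_apply]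
  · rw [← Equiv.Perm.mul_apply, ← zpow_add, add_neg_cancel, zpow_zero, Equiv.Perm.one_apply]

lemma zpow_apply_mem_ThetaZ {f : Equiv.Perm (ℝ × ℝ)} {E : Set (ℝ × ℝ)} {z : ℝ × ℝ}
    (hz : z ∈ ThetaZ f E) (k : ℤ) : (f ^ k) z ∈ ThetaZ f E :=
  mem_ThetaZ_iff.2 fun n => by
    rw [← Equiv.Perm.mul_apply, ← zpow_add]
    exact mem_ThetaZ_iff.1 hz _

/-- `n ρ_n(z)` in the notation of the statement. -/
def displacement (f : Equiv.Perm (ℝ × ℝ)) (n : ℕ) (z : ℝ × ℝ) : ℝ := ((f ^ n) z).1 - z.1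

section Displacement

variable {f : Equiv.Perm (ℝ × ℝ)}

lemma continuous_displacement (hf : Continuous f) (n : ℕ) : Continuous (displacement f n) := by
  unfold displacement
  rw [Equiv.Perm.coe_pow]
  exact (continuous_fst.comp (hf.iterate n)).sub continuous_fst

lemma displacement_fst_add_int (hcomm : Commute f deckT) (n : ℕ) (k : ℤ) (z : ℝ × ℝ) :
    displacement f n (z.1 + k, z.2) = displacement f n z := by
  simp only [displacement, apply_fst_add_int (hcomm.pow_left n)]
  ring

lemma displacement_pow_apply (m j : ℕ) (z : ℝ × ℝ) :
    displacement f m ((f ^ j) z) = ((f ^ (j + m)) z).1 - ((f ^ j) z).1 := by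
  rw [displacement, add_comm, pow_add, Equiv.Perm.mul_apply]

lemma exists_one_le_displacement_of_rhoB_pos {K : Set (ℝ × ℝ)}
    (hK : ∀ z ∈ K, ∀ n : ℕ, (f ^ n) z ∈ K) (hρ : rhoB f K ⊆ Ioi 0) :
    ∃ m ≥ 1, ∀ z ∈ K, 1 ≤ displacement f m z := by
  by_contra! h
  choose z hzK hz using fun k : ℕ => h (k + 1) (by omega)
  set r : ℕ → EReal := fun k => ((displacement f (k + 1) (z k) / (k + 1) : ℝ) : EReal)
  obtain ⟨l, hl⟩ := exists_clusterPt_of_compactSpace (map r atTop)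
  have hcl : ∀ j : ℕ, l ∈ closure (r '' Ici j) := fun j =>
    mem_closure_iff_clusterPt.2 (hl.mono (le_principal_iff.2 (image_mem_map (Ici_mem_atTop j))))
  have hlρ : l ∈ rhoB f K := by
    simp only [rhoB, mem_iInter]
    refine fun j _ => closure_mono ?_ (hcl j)
    rintro _ ⟨k, hk, rfl⟩
    refine mem_iUnion₂.2 ⟨k + 1, by simp only [mem_Ici] at hk; omega, z k, hzK k,
      hK _ (hzK k) _, ?_⟩
    simp [r, displacement]
  have hle : ∀ j : ℕ, l ≤ ((1 / (j + 1) : ℝ) : EReal) := by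
    refine fun j => closure_minimal ?_ isClosed_Iic (hcl j)
    rintro _ ⟨k, hk, rfl⟩
    simp only [mem_Iic, r, EReal.coe_le_coe_iff]
    calc displacement f (k + 1) (z k) / (k + 1) ≤ 1 / (k + 1) := by
          gcongr; exact (hz k).le
      _ ≤ 1 / (j + 1) := by gcongr; exact_mod_cast hk
  obtain ⟨x, hx0, hxl⟩ := EReal.lt_iff_exists_real_btwn.1 (hρ hlρ)
  obtain ⟨j, hj⟩ := exists_nat_one_div_lt (EReal.coe_pos.1 hx0)
  exact (hle j).not_gt ((EReal.coe_lt_coe hj).trans hxl)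

end Displacement

lemma Equiv.Perm.continuous_zpow {α : Type*} [TopologicalSpace α] {f : Equiv.Perm α}
    (hf : Continuous f)
    (hf' : Continuous f.symm) (n : ℤ) : Continuous ⇑(f ^ n) := by
  induction n using Int.induction_on with
  | zero => exact continuous_id
  | succ n ih => rw [zpow_add_one, Equiv.Perm.coe_mul]; exact ih.comp hf
  | pred n ih => rw [zpow_sub_one, Equiv.Perm.coe_mul]; exact ih.comp hf'

lemma isClosed_BandAB (a b : ℝ) : IsClosed (BandAB a b) :=
  (isClosed_le continuous_const continuous_snd).inter (isClosed_le continuous_snd continuous_const)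

lemma exists_window_drift {f : Equiv.Perm (ℝ × ℝ)} (hf : Continuous f) (hf' : Continuous f.symm)
    (hcomm : Commute f deckT) {a b : ℝ} {m : ℕ}
    (hdrift : ∀ z ∈ ThetaZ f (BandAB a b), 1 ≤ displacement f m z) :
    ∃ N : ℕ, ∀ z : ℝ × ℝ, (∀ j : ℤ, |j| ≤ N → (f ^ j) z ∈ BandAB a b) →
      1 / 2 ≤ displacement f m z := by
  by_contra! h
  set t : ℕ → Set (ℝ × ℝ) := fun N => Icc ((0 : ℝ), b) (1, a) ∩
    {w | ∀ j : ℤ, |j| ≤ N → (f ^ j) w ∈ BandAB a b} ∩ {w | displacement f m w ≤ 1 / 2}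
  have hclosed : ∀ N, IsClosed (t N) := fun N => by
    refine (isClosed_Icc.inter ?_).inter
      (isClosed_le (continuous_displacement hf m) continuous_const)
    simp only [ofPred_forall]
    exact isClosed_iInter fun j => isClosed_iInter fun _ =>
      (isClosed_BandAB a b).preimage (Equiv.Perm.continuous_zpow hf hf' j)
  have hne : ∀ N, (t N).Nonempty := by
    intro N
    obtain ⟨z, hwin, hz⟩ := h N
    obtain ⟨k, hk⟩ := exists_int_add_mem_Icc (by simpa using hwin 0 (by simp))
    refine ⟨(z.1 + k, z.2), ⟨hk, fun j hj => ?_⟩, ?_⟩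
    · rw [apply_fst_add_int (hcomm.zpow_left j)]
      exact hwin j hj
    · rw [mem_ofPred_eq, displacement_fst_add_int hcomm]
      exact hz.le
  have hanti : ∀ N, t (N + 1) ⊆ t N := fun N w hw =>
    ⟨⟨hw.1.1, fun j hj => hw.1.2 j (hj.trans (by push_cast; omega))⟩, hw.2⟩
  obtain ⟨w, hw⟩ := IsCompact.nonempty_iInter_of_sequence_nonempty_isCompact_isClosed t hanti hne
    (isCompact_Icc.of_isClosed_subset (hclosed 0) fun _ h => h.1.1) hclosed
  rw [mem_iInter] at hw
  have hwΘ : w ∈ ThetaZ f (BandAB a b) :=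
    mem_ThetaZ_iff.2 fun j => (hw j.natAbs).1.2 j (Int.abs_eq_natAbs j).le
  have hw0 : displacement f m w ≤ 1 / 2 := (hw 0).2
  linarith [hdrift w hwΘ]

lemma add_mul_le_of_forall_lt {X : ℕ → ℝ} {a s t : ℕ} {δ : ℝ}
    (h : ∀ i < t, X (a + i * s) + δ ≤ X (a + (i + 1) * s)) : X a + t * δ ≤ X (a + t * s) := by
  induction t with
  | zero => simp
  | succ t ih =>
    have hlast := h t (by omega)
    have hfirst := ih fun i hi => h i (by omega)
    push_cast
    linarith

lemma sub_mul_le_of_forall_lt {X : ℕ → ℝ} {C : ℝ} {a r : ℕ}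
    (h : ∀ j, a ≤ j → j < a + r → X j - C ≤ X (j + 1)) : X a - r * C ≤ X (a + r) := by
  have := add_mul_le_of_forall_lt (X := X) (a := a) (s := 1) (t := r) (δ := -C)
    fun i hi => by simpa [← add_assoc, sub_eq_add_neg] using h (a + i) (by omega) (by omega)
  simpa [sub_eq_add_neg] using this

lemma exists_lt_of_steps_and_blocks {C δ : ℝ} (hC : 0 ≤ C) (hδ : 0 < δ) (N m : ℕ) (hm : 0 < m)
    (M : ℝ) : ∃ n₀ : ℕ, ∀ (n : ℕ) (X : ℕ → ℝ), n₀ ≤ n → (∀ j < n, X j - C ≤ X (j + 1)) →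
      (∀ j, N ≤ j → j + N ≤ n → X j + δ ≤ X (j + m)) → X 0 + M < X n := by
  set T : ℕ := ⌈(M + (2 * N + m) * C) / δ⌉₊ + 1
  refine ⟨2 * N + T * m, fun n X hn hstep hblock => ?_⟩
  obtain ⟨t, ht⟩ : ∃ t, t = (n - 2 * N) / m := ⟨_, rfl⟩
  set r := n - (N + t * m)
  have htm : t * m ≤ n - 2 * N := ht ▸ Nat.div_mul_le_self _ _
  have hrm : r < N + m := by
    have : n - 2 * N < t * m + m := ht ▸ Nat.lt_div_mul_add hm
    omega
  have hTt : T ≤ t := ht ▸ (Nat.le_div_iff_mul_le hm).2 (by omega)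
  -- `N` unit steps, then `t` blocks of length `m`, then `r` unit steps
  have hhead : X 0 - N * C ≤ X N := by
    simpa using sub_mul_le_of_forall_lt (a := 0) (r := N) fun j _ hj => hstep j (by omega)
  have hmid := add_mul_le_of_forall_lt (X := X) (a := N) (s := m) (t := t) (δ := δ)
    fun i hi => by
      have : i * m + m ≤ t * m := by simpa [add_mul] using Nat.mul_le_mul_right m hi
      have := hblock (N + i * m) (by omega) (by omega)
      rwa [add_mul, one_mul, ← add_assoc]
  have htail : X (N + t * m) - r * C ≤ X n := by
    have := sub_mul_le_of_forall_lt (a := N + t * m) (r := r) fun j _ hj => hstep j (by omega)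
    rwa [show N + t * m + r = n by omega] at this
  have hrC : (r : ℝ) * C ≤ (N + m) * C := by gcongr; exact_mod_cast hrm.le
  have hTδ : M + (2 * N + m) * C < T * δ := by
    have := Nat.le_ceil ((M + (2 * N + m) * C) / δ)
    rw [div_le_iff₀ hδ] at this
    push_cast [T]
    linarith
  have htδ : (T : ℝ) * δ ≤ t * δ := by gcongr
  linarith

section Band

variable {f : Equiv.Perm (ℝ × ℝ)} {c₀ c₁ : ℝ}

lemma pow_apply_mem_band_of_le (h₀ : MapsTo f {p | p.2 ≤ c₀} {q | q.2 < c₀})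
    (h₁ : MapsTo f {p | p.2 ≤ c₁} {q | q.2 < c₁}) {z : ℝ × ℝ} (hz : z ∈ BandAB c₀ c₁) {n j : ℕ}
    (hn : (f ^ n) z ∈ BandAB c₀ c₁) (hj : j ≤ n) : (f ^ j) z ∈ BandAB c₀ c₁ := by
  have hS : MapsTo f {p : ℝ × ℝ | p.2 ≤ c₀} {p | p.2 ≤ c₀} := fun p hp =>
    show (f p).2 ≤ c₀ from (h₀ hp).le
  have hT : MapsTo f {p : ℝ × ℝ | c₁ ≤ p.2}ᶜ {p | c₁ ≤ p.2}ᶜ := fun p (hp : ¬ c₁ ≤ p.2) =>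
    show ¬ c₁ ≤ (f p).2 from (h₁ (le_of_not_ge hp)).not_ge
  rw [Equiv.Perm.coe_pow] at hn ⊢
  have := iterate_mem_inter_of_mapsTo hS hT hz.2 hn.1 hj
  exact ⟨this.2, this.1⟩

lemma exists_lt_displacement_of_mem_band (hf : Continuous f) (hcomm : Commute f deckT)
    (h₀ : MapsTo f {p | p.2 ≤ c₀} {q | q.2 < c₀}) (h₁ : MapsTo f {p | p.2 ≤ c₁} {q | q.2 < c₁})
    {m N : ℕ} (hm : 1 ≤ m)
    (hN : ∀ z : ℝ × ℝ, (∀ j : ℤ, |j| ≤ N → (f ^ j) z ∈ BandAB c₀ c₁) →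
      1 / 2 ≤ displacement f m z) (M : ℝ) :
    ∃ n₀ : ℕ, ∀ n ≥ n₀, ∀ z ∈ BandAB c₀ c₁, (f ^ n) z ∈ BandAB c₀ c₁ →
      M < displacement f n z := by
  obtain ⟨C, hC0, hC⟩ := exists_abs_le_on_band (continuous_displacement hf 1)
    (displacement_fst_add_int hcomm 1) c₀ c₁
  obtain ⟨n₀, hn₀⟩ := exists_lt_of_steps_and_blocks hC0 one_half_pos N m hm M
  refine ⟨n₀, fun n hn z hz hnz => ?_⟩
  have hseg : ∀ j ≤ n, (f ^ j) z ∈ BandAB c₀ c₁ := fun j hj =>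
    pow_apply_mem_band_of_le h₀ h₁ hz hnz hj
  have hstep : ∀ j < n, ((f ^ j) z).1 - C ≤ ((f ^ (j + 1)) z).1 := fun j hj => by
    have := (abs_le.1 (hC _ (hseg j hj.le))).1
    rw [displacement_pow_apply] at this
    linarith
  have hblock : ∀ j, N ≤ j → j + N ≤ n → ((f ^ j) z).1 + 1 / 2 ≤ ((f ^ (j + m)) z).1 := by
    intro j hNj hjN
    have hwin : ∀ i : ℤ, |i| ≤ N → (f ^ i) ((f ^ j) z) ∈ BandAB c₀ c₁ := by
      intro i hi
      obtain ⟨hi₁, hi₂⟩ := abs_le.1 hi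
      obtain ⟨k, hk⟩ := Int.eq_ofNat_of_zero_le (by omega : 0 ≤ i + j)
      rw [← zpow_natCast f j, ← Equiv.Perm.mul_apply, ← zpow_add, hk, zpow_natCast]
      exact hseg k (by omega)
    have := hN _ hwin
    rw [displacement_pow_apply] at this
    linarith
  have := hn₀ n (fun j => ((f ^ j) z).1) hn hstep hblock
  simp only [pow_zero, Equiv.Perm.one_apply] at this
  rw [displacement]
  linarith

lemma image_zpow_inter_eq_empty {n₀ : ℕ} {M : ℝ} {K A : Set (ℝ × ℝ)} (hKA : K ⊆ A)
    (hK : ∀ u ∈ K, ∀ v ∈ K, |u.1 - v.1| ≤ M)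
    (hdisp : ∀ n ≥ n₀, ∀ z ∈ A, (f ^ n) z ∈ A → M < displacement f n z) {n : ℤ}
    (hn : (n₀ : ℤ) ≤ |n|) : (f ^ n) '' K ∩ K = ∅ := by
  have hret : ∀ k ≥ n₀, ∀ u ∈ K, (f ^ k) u ∉ K := fun k hk u hu hku =>
    (hdisp k hk u (hKA hu) (hKA hku)).not_ge ((le_abs_self _).trans (hK _ hku u hu))
  refine eq_empty_iff_forall_notMem.2 ?_
  rintro _ ⟨⟨u, hu, rfl⟩, hfu⟩
  obtain ⟨k, rfl | rfl⟩ := Int.eq_nat_or_neg n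
  · rw [zpow_natCast] at hfu
    exact hret k (by simpa using hn) u hu hfu
  · refine hret k (by simpa using hn) _ hfu ?_
    rwa [← zpow_natCast, ← Equiv.Perm.mul_apply, ← zpow_add, add_neg_cancel, zpow_zero]

end Band

theorem iterates_eventually_disjoint_general
    (ftil : Equiv.Perm (ℝ × ℝ)) (hftc : Continuous ftil) (hftc' : Continuous ftil.symm)
    (hcomm : ∀ z : ℝ × ℝ, ftil (deckT z) = deckT (ftil z))
    (c0 c1 c2 : ℝ) (h01 : c1 < c0)
    (hH1 : ∀ c ∈ ({c0, c1, c2} : Set ℝ), ∀ p : ℝ × ℝ, p.2 = c → (ftil p).2 < c)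
    (hTh0 : (ThetaZ ftil (BandAB c0 c1)).Nonempty)
    (hr0 : rhoB ftil (ThetaZ ftil (BandAB c0 c1)) ⊆ Ioo (0 : EReal) ⊤) :
    ∀ M : ℝ, 0 < M → ∃ n0 : ℕ, ∀ K : Set (ℝ × ℝ), IsCompact K → K ⊆ BandAB c0 c1 →
      (∀ u ∈ K, ∀ v ∈ K, |u.1 - v.1| ≤ M) →
      ∀ n : ℤ, (n0 : ℤ) ≤ |n| → ((ftil ^ n) '' K) ∩ K = ∅ := by
  intro M _
  have hT := commute_deckT hcomm
  have hH₀ := hH1 c0 (by simp)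
  have hH₁ := hH1 c1 (by simp)
  obtain ⟨z, hz⟩ := hTh0
  have hz₀ : z ∈ BandAB c0 c1 := by simpa using mem_ThetaZ_iff.1 hz 0
  have hz₁ : ftil z ∈ BandAB c0 c1 := by simpa using mem_ThetaZ_iff.1 hz 1
  have hzc₁ : c1 < z.2 := hz₀.1.lt_of_ne fun h => (hH₁ z h.symm).not_ge hz₁.1
  obtain ⟨h₀, h₁⟩ := mapsTo_lowerHalfPlanes hftc hftc' hT h01 hH₀ hH₁ hzc₁ hz₁.1
  obtain ⟨m, hm, hdrift⟩ := exists_one_le_displacement_of_rhoB_pos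
    (fun w hw n => by simpa using zpow_apply_mem_ThetaZ hw n) (hr0.trans Ioo_subset_Ioi_self)
  obtain ⟨N, hN⟩ := exists_window_drift hftc hftc' hT hdrift
  obtain ⟨n0, hn0⟩ := exists_lt_displacement_of_mem_band hftc hT h₀ h₁ hm hN M
  exact ⟨n0, fun K _ hKA hKM n hn => image_zpow_inter_eq_empty hKA hKM hn0 hn⟩

/-- **Lemma 6.8.** Under (H₁)–(H₃), for every `M > 0` there is `n₀` such that every compact
`K̃ ⊆ Ã₀` of horizontal diameter at most `M` is disjoint from its `n`-th iterate whenever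
`|n| ≥ n₀`. -/
theorem iterates_eventually_disjoint
    (ftil : Equiv.Perm (ℝ × ℝ)) (hftc : Continuous ftil) (hftc' : Continuous ftil.symm)
    (hfI : IsotopicToIdP ftil)
    (hcomm : ∀ z : ℝ × ℝ, ftil (deckT z) = deckT (ftil z))
    (c0 c1 c2 : ℝ) (h01 : c1 < c0) (h12 : c2 < c1)
    (hH1 : ∀ c ∈ ({c0, c1, c2} : Set ℝ), ∀ p : ℝ × ℝ, p.2 = c → (ftil p).2 < c)
    (hH2 : ∀ n : ℕ, 1 ≤ n → ∃ p : ℝ × ℝ, p.2 = c0 ∧ ((ftil ^ n) p).2 = c2)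
    (hTh0 : (ThetaZ ftil (BandAB c0 c1)).Nonempty)
    (hTh1 : (ThetaZ ftil (BandAB c1 c2)).Nonempty)
    (hr0 : rhoB ftil (ThetaZ ftil (BandAB c0 c1)) ⊆ Ioo (0 : EReal) ⊤)
    (hr1 : rhoB ftil (ThetaZ ftil (BandAB c1 c2)) ⊆ Ioo ⊥ (0 : EReal)) :
    ∀ M : ℝ, 0 < M → ∃ n0 : ℕ, ∀ K : Set (ℝ × ℝ), IsCompact K → K ⊆ BandAB c0 c1 →
      (∀ u ∈ K, ∀ v ∈ K, |u.1 - v.1| ≤ M) →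
      ∀ n : ℤ, (n0 : ℤ) ≤ |n| → ((ftil ^ n) '' K) ∩ K = ∅ :=
  iterates_eventually_disjoint_general ftil hftc hftc' hcomm c0 c1 c2 h01 hH1 hTh0 hr0
end
end
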